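/- arXiv:math/0212258 — 2 statements merged into one kernel-verified Lean document; each statement's English description precedes it below -/
import Mathlib

section
/- Let r : ℂ×ℂ → A⊗A be a unitary solution of the AYBE, and suppose that for every v ∈ ℂ the limit r̄(v) = lim_{u→0, u≠0} (pr⊗pr) r(u,v) exists. Then r̄ is a unitary solution of the CYBE with spectral parameter: [r̄^{12}(v), r̄^{13}(v+v′)] + [r̄^{12}(v), r̄^{23}(v′)] + [r̄^{13}(v+v′), r̄^{23}(v′)] = 0 for all v, v′, and r̄^{21}(−v) = −r̄(v). -/
open Complex

/-- `Matₙ(ℂ)` -/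
abbrev M1 (n : ℕ) := Matrix (Fin n) (Fin n) ℂ
/-- `Matₙ ⊗ Matₙ`, realized as matrices indexed by pairs (Kronecker indexing). -/
abbrev M2 (n : ℕ) := Matrix (Fin n × Fin n) (Fin n × Fin n) ℂ
/-- `Matₙ ⊗ Matₙ ⊗ Matₙ`. -/
abbrev M3 (n : ℕ) := Matrix (Fin n × Fin n × Fin n) (Fin n × Fin n × Fin n) ℂ

/-- matrix unit `e_{ij}` (ℕ-indexed, zero if out of range) -/
def Eu (n : ℕ) (i j : ℕ) : M1 n := fun a b => if (a : ℕ) = i ∧ (b : ℕ) = j then 1 else 0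

/-- Kronecker/tensor product of two matrices: `a ⊗ b`. -/
def tens {n : ℕ} (a b : M1 n) : M2 n := fun p q => a p.1 q.1 * b p.2 q.2

/-- `x ↦ x^{12}` -/
def emb12 {n : ℕ} (x : M2 n) : M3 n :=
  fun p q => x (p.1, p.2.1) (q.1, q.2.1) * (if p.2.2 = q.2.2 then 1 else 0)
/-- `x ↦ x^{13}` -/
def emb13 {n : ℕ} (x : M2 n) : M3 n :=
  fun p q => x (p.1, p.2.2) (q.1, q.2.2) * (if p.2.1 = q.2.1 then 1 else 0)
/-- `x ↦ x^{23}` -/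
def emb23 {n : ℕ} (x : M2 n) : M3 n :=
  fun p q => x (p.2.1, p.2.2) (q.2.1, q.2.2) * (if p.1 = q.1 then 1 else 0)
/-- `x ↦ x^{21}` (flip of the two tensor factors) -/
def flipT {n : ℕ} (x : M2 n) : M2 n := fun p q => x (p.2, p.1) (q.2, q.1)

/-- The permutation matrix `P = Σ_{i,j} e_{ij} ⊗ e_{ji}`. -/
def Pmat (n : ℕ) : M2 n := fun p q => if p.1 = q.2 ∧ p.2 = q.1 then 1 else 0

/-- Left-hand side of the AYBE with two spectral parameters. -/
noncomputable def aybeLHS {n : ℕ} (r : ℂ → ℂ → M2 n) (u u' v v' : ℂ) : M3 n :=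
  emb12 (r (-u') v) * emb13 (r (u + u') (v + v'))
    - emb23 (r (u + u') v') * emb12 (r u v)
    + emb13 (r u (v + v')) * emb23 (r u' v')

/-- Left-hand side of the CYBE with spectral parameter. -/
noncomputable def cybeLHS {n : ℕ} (f : ℂ → M2 n) (v v' : ℂ) : M3 n :=
  (emb12 (f v) * emb13 (f (v + v')) - emb13 (f (v + v')) * emb12 (f v))
    + (emb12 (f v) * emb23 (f v') - emb23 (f v') * emb12 (f v))
    + (emb13 (f (v + v')) * emb23 (f v') - emb23 (f v') * emb13 (f (v + v')))


/-- unitarity for a two-parameter `r`: `r^{21}(-u,-v) = -r(u,v)` -/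
def Unitary2 {n : ℕ} (r : ℂ → ℂ → M2 n) : Prop :=
  ∀ u v : ℂ, flipT (r (-u) (-v)) = - r u v

/-- `pr ⊗ pr` on `A ⊗ A`, where `pr x = x - (tr x / n) • 1` is the orthogonal projection
onto traceless matrices. -/
noncomputable def prpr {n : ℕ} (x : M2 n) : M2 n := fun p q =>
  x p q
    - (1 / (n : ℂ)) * (if p.1 = q.1 then 1 else 0) * (∑ m : Fin n, x (m, p.2) (m, q.2))
    - (1 / (n : ℂ)) * (if p.2 = q.2 then 1 else 0) * (∑ m : Fin n, x (p.1, m) (q.1, m))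
    + (1 / (n : ℂ)) ^ 2 * (if p.1 = q.1 then 1 else 0) * (if p.2 = q.2 then 1 else 0)
        * (∑ m : Fin n, ∑ l : Fin n, x (m, l) (m, l))

variable {n : ℕ}

noncomputable def Sm (x : M2 n) : M1 n := fun a b => ∑ m, x (m, a) (m, b)
noncomputable def Tm (x : M2 n) : M1 n := fun a b => ∑ m, x (a, m) (b, m)
noncomputable def tauC (x : M2 n) : ℂ := ∑ m, ∑ l, x (m, l) (m, l)

lemma decompS (x : M2 n) :
    prpr x = x + tens 1 ((-(1/(n:ℂ))) • Sm x + ((1/(n:ℂ))^2 * tauC x) • 1)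
      + tens ((-(1/(n:ℂ))) • Tm x) 1 := by
  funext p q
  simp only [prpr, tens, Sm, Tm, tauC, Matrix.add_apply, Matrix.smul_apply, Matrix.one_apply,
    smul_eq_mul, mul_ite, ite_mul, mul_one, mul_zero, zero_mul, one_mul]
  split_ifs <;> ring

lemma decompT (x : M2 n) :
    prpr x = x + tens ((-(1/(n:ℂ))) • Tm x + ((1/(n:ℂ))^2 * tauC x) • 1) 1
      + tens 1 ((-(1/(n:ℂ))) • Sm x) := by
  funext p q
  simp only [prpr, tens, Sm, Tm, tauC, Matrix.add_apply, Matrix.smul_apply, Matrix.one_apply,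
    smul_eq_mul, mul_ite, ite_mul, mul_one, mul_zero, zero_mul, one_mul]
  split_ifs <;> ring

lemma emb12_add (x y : M2 n) : emb12 (x + y) = emb12 x + emb12 y := by
  funext p q; simp [emb12, Matrix.add_apply]; split_ifs <;> ring
lemma emb13_add (x y : M2 n) : emb13 (x + y) = emb13 x + emb13 y := by
  funext p q; simp [emb13, Matrix.add_apply]; split_ifs <;> ring
lemma emb23_add (x y : M2 n) : emb23 (x + y) = emb23 x + emb23 y := by
  funext p q; simp [emb23, Matrix.add_apply]; split_ifs <;> ring



lemma m1213 (f g : M2 n) (p q : Fin n × Fin n × Fin n) :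
    (emb12 f * emb13 g) p q
      = ∑ k : Fin n, f (p.1, p.2.1) (k, q.2.1) * g (k, p.2.2) (q.1, q.2.2) := by
  rw [Matrix.mul_apply, Fintype.sum_prod_type]
  simp [emb12, emb13, Fintype.sum_prod_type, mul_ite, ite_mul, mul_one, mul_zero, zero_mul,
    one_mul, Finset.sum_ite_eq, Finset.sum_ite_eq']

lemma m1312 (f g : M2 n) (p q : Fin n × Fin n × Fin n) :
    (emb13 g * emb12 f) p q
      = ∑ k : Fin n, g (p.1, p.2.2) (k, q.2.2) * f (k, p.2.1) (q.1, q.2.1) := by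
  rw [Matrix.mul_apply, Fintype.sum_prod_type]
  simp [emb12, emb13, Fintype.sum_prod_type, mul_ite, ite_mul, mul_one, mul_zero, zero_mul,
    one_mul, Finset.sum_ite_eq, Finset.sum_ite_eq']

lemma m1223 (f g : M2 n) (p q : Fin n × Fin n × Fin n) :
    (emb12 f * emb23 g) p q
      = ∑ k : Fin n, f (p.1, p.2.1) (q.1, k) * g (k, p.2.2) (q.2.1, q.2.2) := by
  rw [Matrix.mul_apply, Fintype.sum_prod_type]
  simp [emb12, emb23, Fintype.sum_prod_type, mul_ite, ite_mul, mul_one, mul_zero, zero_mul,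
    one_mul, Finset.sum_ite_eq, Finset.sum_ite_eq']

lemma m2312 (f g : M2 n) (p q : Fin n × Fin n × Fin n) :
    (emb23 g * emb12 f) p q
      = ∑ k : Fin n, g (p.2.1, p.2.2) (k, q.2.2) * f (p.1, k) (q.1, q.2.1) := by
  rw [Matrix.mul_apply, Fintype.sum_prod_type]
  simp [emb12, emb23, Fintype.sum_prod_type, mul_ite, ite_mul, mul_one, mul_zero, zero_mul,
    one_mul, Finset.sum_ite_eq, Finset.sum_ite_eq']

lemma m1323 (f g : M2 n) (p q : Fin n × Fin n × Fin n) :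
    (emb13 f * emb23 g) p q
      = ∑ k : Fin n, f (p.1, p.2.2) (q.1, k) * g (p.2.1, k) (q.2.1, q.2.2) := by
  rw [Matrix.mul_apply, Fintype.sum_prod_type]
  simp [emb13, emb23, Fintype.sum_prod_type, mul_ite, ite_mul, mul_one, mul_zero, zero_mul,
    one_mul, Finset.sum_ite_eq, Finset.sum_ite_eq']

lemma m2313 (f g : M2 n) (p q : Fin n × Fin n × Fin n) :
    (emb23 g * emb13 f) p q
      = ∑ k : Fin n, g (p.2.1, p.2.2) (q.2.1, k) * f (p.1, k) (q.1, q.2.2) := by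
  rw [Matrix.mul_apply, Fintype.sum_prod_type]
  simp [emb13, emb23, Fintype.sum_prod_type, mul_ite, ite_mul, mul_one, mul_zero, zero_mul,
    one_mul, Finset.sum_ite_eq, Finset.sum_ite_eq']

lemma K1 (s : M1 n) (g : M2 n) : emb12 (tens 1 s) * emb13 g = emb13 g * emb12 (tens 1 s) := by
  funext p q
  rw [m1213, m1312]
  simp [tens, Matrix.one_apply, mul_ite, ite_mul, mul_one, mul_zero, zero_mul, one_mul,
    Finset.sum_ite_eq, Finset.sum_ite_eq']
  ring

lemma K2 (s : M1 n) (f : M2 n) : emb13 (tens 1 s) * emb12 f = emb12 f * emb13 (tens 1 s) := by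
  funext p q
  rw [m1312, m1213]
  simp [tens, Matrix.one_apply, mul_ite, ite_mul, mul_one, mul_zero, zero_mul, one_mul,
    Finset.sum_ite_eq, Finset.sum_ite_eq']
  ring

lemma K3 (t : M1 n) (g : M2 n) : emb12 (tens t 1) * emb23 g = emb23 g * emb12 (tens t 1) := by
  funext p q
  rw [m1223, m2312]
  simp [tens, Matrix.one_apply, mul_ite, ite_mul, mul_one, mul_zero, zero_mul, one_mul,
    Finset.sum_ite_eq, Finset.sum_ite_eq']
  ring

lemma K4 (s : M1 n) (f : M2 n) : emb23 (tens 1 s) * emb12 f = emb12 f * emb23 (tens 1 s) := by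
  funext p q
  rw [m2312, m1223]
  simp [tens, Matrix.one_apply, mul_ite, ite_mul, mul_one, mul_zero, zero_mul, one_mul,
    Finset.sum_ite_eq, Finset.sum_ite_eq']
  ring

lemma K5 (t : M1 n) (g : M2 n) : emb13 (tens t 1) * emb23 g = emb23 g * emb13 (tens t 1) := by
  funext p q
  rw [m1323, m2313]
  simp [tens, Matrix.one_apply, mul_ite, ite_mul, mul_one, mul_zero, zero_mul, one_mul,
    Finset.sum_ite_eq, Finset.sum_ite_eq']
  ring

lemma K6 (t : M1 n) (f : M2 n) : emb23 (tens t 1) * emb13 f = emb13 f * emb23 (tens t 1) := by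
  funext p q
  rw [m2313, m1323]
  simp [tens, Matrix.one_apply, mul_ite, ite_mul, mul_one, mul_zero, zero_mul, one_mul,
    Finset.sum_ite_eq, Finset.sum_ite_eq']
  ring

lemma comm_reduce {R : Type*} [Ring R] (A J W B J' W' : R)
    (h1 : J*B = B*J) (h2 : J*J' = J'*J) (h3 : J*W' = W'*J)
    (h4 : J'*A = A*J') (h5 : J'*W = W*J') :
    (A+J+W)*(B+J'+W') - (B+J'+W')*(A+J+W)
      = (A*B - B*A) + (A*W' - W'*A) + (W*B - B*W) + (W*W' - W'*W) := by
  simp only [add_mul, mul_add]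
  rw [h1, h2, h3, h4, h5]
  abel

lemma sum_rot {α : Type*} [AddCommMonoid α] (f : Fin n → Fin n → Fin n → α) :
    ∑ a, ∑ b, ∑ c, f a b c = ∑ c, ∑ b, ∑ a, f a b c :=
  calc ∑ a, ∑ b, ∑ c, f a b c
      = ∑ b, ∑ a, ∑ c, f a b c := Finset.sum_comm
    _ = ∑ b, ∑ c, ∑ a, f a b c := Finset.sum_congr rfl fun _ _ => Finset.sum_comm
    _ = ∑ c, ∑ b, ∑ a, f a b c := Finset.sum_comm

lemma sum_cyc {α : Type*} [AddCommMonoid α] (f : Fin n → Fin n → Fin n → α) :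
    ∑ a, ∑ b, ∑ c, f a b c = ∑ b, ∑ c, ∑ a, f a b c :=
  calc ∑ a, ∑ b, ∑ c, f a b c
      = ∑ b, ∑ a, ∑ c, f a b c := Finset.sum_comm
    _ = ∑ b, ∑ c, ∑ a, f a b c := Finset.sum_congr rfl fun _ _ => Finset.sum_comm

lemma sum_cyc2 {α : Type*} [AddCommMonoid α] (f : Fin n → Fin n → Fin n → α) :
    ∑ a, ∑ b, ∑ c, f a b c = ∑ c, ∑ a, ∑ b, f a b c :=
  calc ∑ a, ∑ b, ∑ c, f a b c
      = ∑ a, ∑ c, ∑ b, f a b c := Finset.sum_congr rfl fun _ _ => Finset.sum_comm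
    _ = ∑ c, ∑ a, ∑ b, f a b c := Finset.sum_comm

lemma sum_swap23 {α : Type*} [AddCommMonoid α] (f : Fin n → Fin n → Fin n → α) :
    ∑ a, ∑ b, ∑ c, f a b c = ∑ a, ∑ c, ∑ b, f a b c :=
  Finset.sum_congr rfl fun _ _ => Finset.sum_comm

lemma sum_swap12 {α : Type*} [AddCommMonoid α] (f : Fin n → Fin n → Fin n → α) :
    ∑ a, ∑ b, ∑ c, f a b c = ∑ b, ∑ a, ∑ c, f a b c := Finset.sum_comm

-- ===== Type A : C_A = emb12 x * emb13 y - emb13 y * emb12 x =====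

lemma zA1 (x y : M2 n) (b c d e : Fin n) :
    ∑ m, (emb12 x * emb13 y - emb13 y * emb12 x) (m, b, c) (m, d, e) = 0 := by
  simp only [Matrix.sub_apply, m1213, m1312]
  rw [Finset.sum_sub_distrib, sub_eq_zero, Finset.sum_comm]
  exact Finset.sum_congr rfl fun m _ => Finset.sum_congr rfl fun k _ => mul_comm _ _

lemma e2A (x y : M2 n) (p q : Fin n × Fin n × Fin n) :
    (emb12 (tens ((-(1/(n:ℂ))) • Tm x) 1) * emb13 y
      - emb13 y * emb12 (tens ((-(1/(n:ℂ))) • Tm x) 1)) p q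
    = -(1/(n:ℂ)) * (if p.2.1 = q.2.1 then 1 else 0)
        * (∑ m, (emb12 x * emb13 y - emb13 y * emb12 x) (p.1, m, p.2.2) (q.1, m, q.2.2)) := by
  simp only [Matrix.sub_apply, m1213, m1312, tens, Matrix.smul_apply, Matrix.one_apply,
    smul_eq_mul, Tm]
  simp only [Finset.sum_sub_distrib, Finset.mul_sum, Finset.sum_mul, mul_sub]
  congr 1 <;>
    (rw [Finset.sum_comm];
     exact Finset.sum_congr rfl fun _ _ => Finset.sum_congr rfl fun _ _ => by ring)

lemma e3A (x y : M2 n) (p q : Fin n × Fin n × Fin n) :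
    (emb12 x * emb13 (tens ((-(1/(n:ℂ))) • Tm y) 1)
      - emb13 (tens ((-(1/(n:ℂ))) • Tm y) 1) * emb12 x) p q
    = -(1/(n:ℂ)) * (if p.2.2 = q.2.2 then 1 else 0)
        * (∑ m, (emb12 x * emb13 y - emb13 y * emb12 x) (p.1, p.2.1, m) (q.1, q.2.1, m)) := by
  simp only [Matrix.sub_apply, m1213, m1312, tens, Matrix.smul_apply, Matrix.one_apply,
    smul_eq_mul, Tm]
  simp only [Finset.sum_sub_distrib, Finset.mul_sum, Finset.sum_mul, mul_sub]
  congr 1 <;>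
    (rw [Finset.sum_comm];
     exact Finset.sum_congr rfl fun _ _ => Finset.sum_congr rfl fun _ _ => by ring)

lemma e4A (x y : M2 n) (p q : Fin n × Fin n × Fin n) :
    (emb12 (tens ((-(1/(n:ℂ))) • Tm x) 1) * emb13 (tens ((-(1/(n:ℂ))) • Tm y) 1)
      - emb13 (tens ((-(1/(n:ℂ))) • Tm y) 1) * emb12 (tens ((-(1/(n:ℂ))) • Tm x) 1)) p q
    = (1/(n:ℂ))^2 * (if p.2.1 = q.2.1 then 1 else 0) * (if p.2.2 = q.2.2 then 1 else 0)
        * (∑ m, ∑ l, (emb12 x * emb13 y - emb13 y * emb12 x) (p.1, m, l) (q.1, m, l)) := by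
  simp only [Matrix.sub_apply, m1213, m1312, tens, Matrix.smul_apply, Matrix.one_apply,
    smul_eq_mul, Tm]
  simp only [Finset.sum_sub_distrib, Finset.mul_sum, Finset.sum_mul, mul_sub]
  congr 1
  · refine (sum_rot _).trans ?_
    refine Finset.sum_congr rfl fun _ _ => Finset.sum_congr rfl fun _ _ =>
      Finset.sum_congr rfl fun _ _ => ?_
    ring
  · refine (sum_cyc _).trans ?_
    refine Finset.sum_congr rfl fun _ _ => Finset.sum_congr rfl fun _ _ =>
      Finset.sum_congr rfl fun _ _ => ?_
    ring
-- ===== Type B : C_B = emb12 x * emb23 z - emb23 z * emb12 x =====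

lemma zB2 (x z : M2 n) (a c d e : Fin n) :
    ∑ m, (emb12 x * emb23 z - emb23 z * emb12 x) (a, m, c) (d, m, e) = 0 := by
  simp only [Matrix.sub_apply, m1223, m2312]
  rw [Finset.sum_sub_distrib, sub_eq_zero, Finset.sum_comm]
  exact Finset.sum_congr rfl fun m _ => Finset.sum_congr rfl fun k _ => mul_comm _ _

lemma e1B (x z : M2 n) (p q : Fin n × Fin n × Fin n) :
    (emb12 (tens 1 ((-(1/(n:ℂ))) • Sm x)) * emb23 z
      - emb23 z * emb12 (tens 1 ((-(1/(n:ℂ))) • Sm x))) p q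
    = -(1/(n:ℂ)) * (if p.1 = q.1 then 1 else 0)
        * (∑ m, (emb12 x * emb23 z - emb23 z * emb12 x) (m, p.2.1, p.2.2) (m, q.2.1, q.2.2)) := by
  simp only [Matrix.sub_apply, m1223, m2312, tens, Matrix.smul_apply, Matrix.one_apply,
    smul_eq_mul, Sm]
  simp only [Finset.sum_sub_distrib, Finset.mul_sum, Finset.sum_mul, mul_sub]
  congr 1 <;>
    (rw [Finset.sum_comm];
     exact Finset.sum_congr rfl fun _ _ => Finset.sum_congr rfl fun _ _ => by ring)

lemma e3B (x z : M2 n) (p q : Fin n × Fin n × Fin n) :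
    (emb12 x * emb23 (tens ((-(1/(n:ℂ))) • Tm z) 1)
      - emb23 (tens ((-(1/(n:ℂ))) • Tm z) 1) * emb12 x) p q
    = -(1/(n:ℂ)) * (if p.2.2 = q.2.2 then 1 else 0)
        * (∑ m, (emb12 x * emb23 z - emb23 z * emb12 x) (p.1, p.2.1, m) (q.1, q.2.1, m)) := by
  simp only [Matrix.sub_apply, m1223, m2312, tens, Matrix.smul_apply, Matrix.one_apply,
    smul_eq_mul, Tm]
  simp only [Finset.sum_sub_distrib, Finset.mul_sum, Finset.sum_mul, mul_sub]
  congr 1 <;>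
    (rw [Finset.sum_comm];
     exact Finset.sum_congr rfl fun _ _ => Finset.sum_congr rfl fun _ _ => by ring)

lemma e4B (x z : M2 n) (p q : Fin n × Fin n × Fin n) :
    (emb12 (tens 1 ((-(1/(n:ℂ))) • Sm x)) * emb23 (tens ((-(1/(n:ℂ))) • Tm z) 1)
      - emb23 (tens ((-(1/(n:ℂ))) • Tm z) 1) * emb12 (tens 1 ((-(1/(n:ℂ))) • Sm x))) p q
    = (1/(n:ℂ))^2 * (if p.1 = q.1 then 1 else 0) * (if p.2.2 = q.2.2 then 1 else 0)
        * (∑ m, ∑ l, (emb12 x * emb23 z - emb23 z * emb12 x) (m, p.2.1, l) (m, q.2.1, l)) := by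
  simp only [Matrix.sub_apply, m1223, m2312, tens, Matrix.smul_apply, Matrix.one_apply,
    smul_eq_mul, Tm, Sm]
  simp only [Finset.sum_sub_distrib, Finset.mul_sum, Finset.sum_mul, mul_sub]
  congr 1
  · refine (sum_rot _).trans ?_
    refine Finset.sum_congr rfl fun _ _ => Finset.sum_congr rfl fun _ _ =>
      Finset.sum_congr rfl fun _ _ => ?_
    ring
  · refine (sum_cyc _).trans ?_
    refine Finset.sum_congr rfl fun _ _ => Finset.sum_congr rfl fun _ _ =>
      Finset.sum_congr rfl fun _ _ => ?_
    ring
-- ===== Type C : C_C = emb13 y * emb23 z - emb23 z * emb13 y =====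

lemma zC3 (y z : M2 n) (a b d e : Fin n) :
    ∑ m, (emb13 y * emb23 z - emb23 z * emb13 y) (a, b, m) (d, e, m) = 0 := by
  simp only [Matrix.sub_apply, m1323, m2313]
  rw [Finset.sum_sub_distrib, sub_eq_zero, Finset.sum_comm]
  exact Finset.sum_congr rfl fun m _ => Finset.sum_congr rfl fun k _ => mul_comm _ _

lemma e1C (y z : M2 n) (p q : Fin n × Fin n × Fin n) :
    (emb13 (tens 1 ((-(1/(n:ℂ))) • Sm y)) * emb23 z
      - emb23 z * emb13 (tens 1 ((-(1/(n:ℂ))) • Sm y))) p q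
    = -(1/(n:ℂ)) * (if p.1 = q.1 then 1 else 0)
        * (∑ m, (emb13 y * emb23 z - emb23 z * emb13 y) (m, p.2.1, p.2.2) (m, q.2.1, q.2.2)) := by
  simp only [Matrix.sub_apply, m1323, m2313, tens, Matrix.smul_apply, Matrix.one_apply,
    smul_eq_mul, Sm]
  simp only [Finset.sum_sub_distrib, Finset.mul_sum, Finset.sum_mul, mul_sub]
  congr 1 <;>
    (rw [Finset.sum_comm];
     exact Finset.sum_congr rfl fun _ _ => Finset.sum_congr rfl fun _ _ => by ring)

lemma e2C (y z : M2 n) (p q : Fin n × Fin n × Fin n) :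
    (emb13 y * emb23 (tens 1 ((-(1/(n:ℂ))) • Sm z))
      - emb23 (tens 1 ((-(1/(n:ℂ))) • Sm z)) * emb13 y) p q
    = -(1/(n:ℂ)) * (if p.2.1 = q.2.1 then 1 else 0)
        * (∑ m, (emb13 y * emb23 z - emb23 z * emb13 y) (p.1, m, p.2.2) (q.1, m, q.2.2)) := by
  simp only [Matrix.sub_apply, m1323, m2313, tens, Matrix.smul_apply, Matrix.one_apply,
    smul_eq_mul, Sm]
  simp only [Finset.sum_sub_distrib, Finset.mul_sum, Finset.sum_mul, mul_sub]
  congr 1 <;>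
    (rw [Finset.sum_comm];
     exact Finset.sum_congr rfl fun _ _ => Finset.sum_congr rfl fun _ _ => by ring)

lemma e4C (y z : M2 n) (p q : Fin n × Fin n × Fin n) :
    (emb13 (tens 1 ((-(1/(n:ℂ))) • Sm y)) * emb23 (tens 1 ((-(1/(n:ℂ))) • Sm z))
      - emb23 (tens 1 ((-(1/(n:ℂ))) • Sm z)) * emb13 (tens 1 ((-(1/(n:ℂ))) • Sm y))) p q
    = (1/(n:ℂ))^2 * (if p.1 = q.1 then 1 else 0) * (if p.2.1 = q.2.1 then 1 else 0)
        * (∑ m, ∑ l, (emb13 y * emb23 z - emb23 z * emb13 y) (m, l, p.2.2) (m, l, q.2.2)) := by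
  simp only [Matrix.sub_apply, m1323, m2313, tens, Matrix.smul_apply, Matrix.one_apply,
    smul_eq_mul, Sm]
  simp only [Finset.sum_sub_distrib, Finset.mul_sum, Finset.sum_mul, mul_sub]
  congr 1
  · refine (sum_rot _).trans ?_
    refine Finset.sum_congr rfl fun _ _ => Finset.sum_congr rfl fun _ _ =>
      Finset.sum_congr rfl fun _ _ => ?_
    ring
  · refine (sum_cyc _).trans ?_
    refine Finset.sum_congr rfl fun _ _ => Finset.sum_congr rfl fun _ _ =>
      Finset.sum_congr rfl fun _ _ => ?_
    ring

noncomputable def PiP (z : M3 n) : M3 n := fun p q =>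
  z p q
  - (1/(n:ℂ)) * (if p.1 = q.1 then 1 else 0) * (∑ m, z (m, p.2.1, p.2.2) (m, q.2.1, q.2.2))
  - (1/(n:ℂ)) * (if p.2.1 = q.2.1 then 1 else 0) * (∑ m, z (p.1, m, p.2.2) (q.1, m, q.2.2))
  - (1/(n:ℂ)) * (if p.2.2 = q.2.2 then 1 else 0) * (∑ m, z (p.1, p.2.1, m) (q.1, q.2.1, m))
  + (1/(n:ℂ))^2 * (if p.1 = q.1 then 1 else 0) * (if p.2.1 = q.2.1 then 1 else 0)
      * (∑ m, ∑ l, z (m, l, p.2.2) (m, l, q.2.2))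
  + (1/(n:ℂ))^2 * (if p.1 = q.1 then 1 else 0) * (if p.2.2 = q.2.2 then 1 else 0)
      * (∑ m, ∑ l, z (m, p.2.1, l) (m, q.2.1, l))
  + (1/(n:ℂ))^2 * (if p.2.1 = q.2.1 then 1 else 0) * (if p.2.2 = q.2.2 then 1 else 0)
      * (∑ m, ∑ l, z (p.1, m, l) (q.1, m, l))
  - (1/(n:ℂ))^3 * (if p.1 = q.1 then 1 else 0) * (if p.2.1 = q.2.1 then 1 else 0)
      * (if p.2.2 = q.2.2 then 1 else 0) * (∑ m, ∑ l, ∑ o, z (m, l, o) (m, l, o))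

lemma zA12 (x y : M2 n) (c e : Fin n) :
    ∑ m, ∑ l, (emb12 x * emb13 y - emb13 y * emb12 x) (m, l, c) (m, l, e) = 0 := by
  rw [Finset.sum_comm]; exact Finset.sum_eq_zero fun l _ => zA1 x y l c l e

lemma zA13 (x y : M2 n) (b d : Fin n) :
    ∑ m, ∑ l, (emb12 x * emb13 y - emb13 y * emb12 x) (m, b, l) (m, d, l) = 0 := by
  rw [Finset.sum_comm]; exact Finset.sum_eq_zero fun l _ => zA1 x y b l d l

lemma zA123 (x y : M2 n) :
    ∑ m, ∑ l, ∑ o, (emb12 x * emb13 y - emb13 y * emb12 x) (m, l, o) (m, l, o) = 0 := by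
  rw [Finset.sum_comm]
  refine Finset.sum_eq_zero fun l _ => ?_
  rw [Finset.sum_comm]
  exact Finset.sum_eq_zero fun o _ => zA1 x y l o l o

lemma zB12 (x z : M2 n) (c e : Fin n) :
    ∑ m, ∑ l, (emb12 x * emb23 z - emb23 z * emb12 x) (m, l, c) (m, l, e) = 0 :=
  Finset.sum_eq_zero fun m _ => zB2 x z m c m e

lemma zB23 (x z : M2 n) (a d : Fin n) :
    ∑ m, ∑ l, (emb12 x * emb23 z - emb23 z * emb12 x) (a, m, l) (d, m, l) = 0 := by
  rw [Finset.sum_comm]; exact Finset.sum_eq_zero fun l _ => zB2 x z a l d l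

lemma zB123 (x z : M2 n) :
    ∑ m, ∑ l, ∑ o, (emb12 x * emb23 z - emb23 z * emb12 x) (m, l, o) (m, l, o) = 0 := by
  refine Finset.sum_eq_zero fun m _ => ?_
  rw [Finset.sum_comm]
  exact Finset.sum_eq_zero fun o _ => zB2 x z m o m o

lemma zC13 (y z : M2 n) (b d : Fin n) :
    ∑ m, ∑ l, (emb13 y * emb23 z - emb23 z * emb13 y) (m, b, l) (m, d, l) = 0 :=
  Finset.sum_eq_zero fun m _ => zC3 y z m b m d

lemma zC23 (y z : M2 n) (a d : Fin n) :
    ∑ m, ∑ l, (emb13 y * emb23 z - emb23 z * emb13 y) (a, m, l) (d, m, l) = 0 :=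
  Finset.sum_eq_zero fun m _ => zC3 y z a m d m

lemma zC123 (y z : M2 n) :
    ∑ m, ∑ l, ∑ o, (emb13 y * emb23 z - emb23 z * emb13 y) (m, l, o) (m, l, o) = 0 :=
  Finset.sum_eq_zero fun m _ => Finset.sum_eq_zero fun l _ => zC3 y z m l m l

lemma lemA (x y : M2 n) :
    emb12 (prpr x) * emb13 (prpr y) - emb13 (prpr y) * emb12 (prpr x)
      = PiP (emb12 x * emb13 y - emb13 y * emb12 x) := by
  rw [decompS x, decompS y, emb12_add, emb12_add, emb13_add, emb13_add,
    comm_reduce _ _ _ _ _ _ (K1 _ _) (K1 _ _) (K1 _ _) (K2 _ _) (K2 _ _)]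
  funext p q
  simp only [Matrix.add_apply]
  rw [e2A, e3A, e4A]
  simp only [PiP]
  rw [zA1, zA12, zA13, zA123]
  ring

lemma lemB (x z : M2 n) :
    emb12 (prpr x) * emb23 (prpr z) - emb23 (prpr z) * emb12 (prpr x)
      = PiP (emb12 x * emb23 z - emb23 z * emb12 x) := by
  rw [decompT x, decompS z, emb12_add, emb12_add, emb23_add, emb23_add,
    comm_reduce _ _ _ _ _ _ (K3 _ _) (K3 _ _) (K3 _ _) (K4 _ _) (K4 _ _)]
  funext p q
  simp only [Matrix.add_apply]
  rw [e1B, e3B, e4B]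
  simp only [PiP]
  rw [zB2, zB12, zB23, zB123]
  ring

lemma lemC (y z : M2 n) :
    emb13 (prpr y) * emb23 (prpr z) - emb23 (prpr z) * emb13 (prpr y)
      = PiP (emb13 y * emb23 z - emb23 z * emb13 y) := by
  rw [decompT y, decompT z, emb13_add, emb13_add, emb23_add, emb23_add,
    comm_reduce _ _ _ _ _ _ (K5 _ _) (K5 _ _) (K5 _ _) (K6 _ _) (K6 _ _)]
  funext p q
  simp only [Matrix.add_apply]
  rw [e1C, e2C, e4C]
  simp only [PiP]
  rw [zC3, zC13, zC23, zC123]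
  ring

-- ===== leg-swap of factors 1,2 on M3, AYBE manipulation =====

def swp (z : M3 n) : M3 n := fun p q => z (p.2.1, p.1, p.2.2) (q.2.1, q.1, q.2.2)

lemma swp_mul (a b : M3 n) : swp (a * b) = swp a * swp b := by
  funext p q
  simp only [swp, Matrix.mul_apply]
  exact Fintype.sum_equiv
    ⟨fun j : Fin n × Fin n × Fin n => (j.2.1, j.1, j.2.2),
     fun j => (j.2.1, j.1, j.2.2), fun j => rfl, fun j => rfl⟩
    _ _ (fun j => rfl)

lemma swp_sub (a b : M3 n) : swp (a - b) = swp a - swp b := rfl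
lemma swp_add (a b : M3 n) : swp (a + b) = swp a + swp b := rfl
lemma swp_zero : swp (0 : M3 n) = 0 := rfl

lemma swp_12 (x : M2 n) : swp (emb12 x) = emb12 (flipT x) := rfl
lemma swp_13 (x : M2 n) : swp (emb13 x) = emb23 x := rfl
lemma swp_23 (x : M2 n) : swp (emb23 x) = emb13 x := rfl

lemma emb12_neg (x : M2 n) : emb12 (-x) = -(emb12 x) := by
  funext p q; simp only [emb12, Matrix.neg_apply]; split_ifs <;> ring

lemma phi_zero (r : ℂ → ℂ → M2 n) (hAYBE : ∀ u u' v v' : ℂ, aybeLHS r u u' v v' = 0)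
    (hUnit : Unitary2 r) (u u' v v' : ℂ) :
    (emb12 (r (u-u') v) * emb13 (r u' (v+v')) - emb13 (r u' (v+v')) * emb12 (r (u-u') v))
    + (emb12 (r u v) * emb23 (r u' v') - emb23 (r u' v') * emb12 (r u v))
    + (emb13 (r u (v+v')) * emb23 (r (u'-u) v')
        - emb23 (r (u'-u) v') * emb13 (r u (v+v'))) = 0 := by
  have e1 : emb12 (r (u-u') v) * emb13 (r u' (v+v')) - emb23 (r u' v') * emb12 (r u v)
      + emb13 (r u (v+v')) * emb23 (r (u'-u) v') = 0 := by
    have h := hAYBE u (u'-u) v v'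
    simp only [aybeLHS] at h
    rw [show u + (u'-u) = u' from by ring, show -(u'-u) = u - u' from by ring] at h
    exact h
  have h := hAYBE (u'-u) u (-v) (v+v')
  simp only [aybeLHS] at h
  rw [show (u'-u) + u = u' from by ring, show (-v) + (v+v') = v' from by ring] at h
  have h2 := congrArg swp h
  simp only [swp_add, swp_sub, swp_mul, swp_zero, swp_12, swp_13, swp_23] at h2
  rw [hUnit u v] at h2
  have hu2 : flipT (r (u'-u) (-v)) = - r (u-u') v := by
    have h3 := hUnit (u-u') v
    rw [show -(u-u') = u'-u from by ring] at h3
    exact h3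
  rw [hu2, emb12_neg, emb12_neg] at h2
  simp only [neg_mul, mul_neg, neg_neg, sub_neg_eq_add] at h2
  have e3 : emb13 (r u' (v+v')) * emb12 (r (u-u') v)
      + emb23 (r (u'-u) v') * emb13 (r u (v+v'))
      - emb12 (r u v) * emb23 (r u' v') = 0 := by
    rw [← h2]; abel
  have key : (emb12 (r (u-u') v) * emb13 (r u' (v+v'))
        - emb13 (r u' (v+v')) * emb12 (r (u-u') v))
      + (emb12 (r u v) * emb23 (r u' v') - emb23 (r u' v') * emb12 (r u v))
      + (emb13 (r u (v+v')) * emb23 (r (u'-u) v')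
        - emb23 (r (u'-u) v') * emb13 (r u (v+v')))
      = (emb12 (r (u-u') v) * emb13 (r u' (v+v')) - emb23 (r u' v') * emb12 (r u v)
          + emb13 (r u (v+v')) * emb23 (r (u'-u) v'))
        - (emb13 (r u' (v+v')) * emb12 (r (u-u') v)
          + emb23 (r (u'-u) v') * emb13 (r u (v+v'))
          - emb12 (r u v) * emb23 (r u' v')) := by abel
  rw [key, e1, e3, sub_zero]

lemma PiP_zero : PiP (0 : M3 n) = 0 := by
  funext p q
  simp [PiP]

lemma PiP_add (a b : M3 n) : PiP (a + b) = PiP a + PiP b := by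
  funext p q
  simp only [PiP, Matrix.add_apply, Finset.sum_add_distrib]
  ring

noncomputable def comb3 (a b c a2 c2 b2 : M2 n) : M3 n :=
  (emb12 a * emb13 b - emb13 b * emb12 a)
  + (emb12 a2 * emb23 c - emb23 c * emb12 a2)
  + (emb13 b2 * emb23 c2 - emb23 c2 * emb13 b2)

lemma comb3_apply (a b c a2 c2 b2 : M2 n) (p q : Fin n × Fin n × Fin n) :
    comb3 a b c a2 c2 b2 p q
      = ((∑ k, a (p.1,p.2.1) (k,q.2.1) * b (k,p.2.2) (q.1,q.2.2))
        - ∑ k, b (p.1,p.2.2) (k,q.2.2) * a (k,p.2.1) (q.1,q.2.1))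
      + ((∑ k, a2 (p.1,p.2.1) (q.1,k) * c (k,p.2.2) (q.2.1,q.2.2))
        - ∑ k, c (p.2.1,p.2.2) (k,q.2.2) * a2 (p.1,k) (q.1,q.2.1))
      + ((∑ k, b2 (p.1,p.2.2) (q.1,k) * c2 (p.2.1,k) (q.2.1,q.2.2))
        - ∑ k, c2 (p.2.1,p.2.2) (q.2.1,k) * b2 (p.1,k) (q.1,q.2.2)) := by
  simp only [comb3, Matrix.add_apply, Matrix.sub_apply, m1213, m1312, m1223, m2312,
    m1323, m2313]

lemma comb3_tendsto {F : Filter ℂ} (A B C A2 C2 B2 : ℂ → M2 n) (a b c a2 c2 b2 : M2 n)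
    (hA : ∀ p q, Filter.Tendsto (fun t => A t p q) F (nhds (a p q)))
    (hB : ∀ p q, Filter.Tendsto (fun t => B t p q) F (nhds (b p q)))
    (hC : ∀ p q, Filter.Tendsto (fun t => C t p q) F (nhds (c p q)))
    (hA2 : ∀ p q, Filter.Tendsto (fun t => A2 t p q) F (nhds (a2 p q)))
    (hC2 : ∀ p q, Filter.Tendsto (fun t => C2 t p q) F (nhds (c2 p q)))
    (hB2 : ∀ p q, Filter.Tendsto (fun t => B2 t p q) F (nhds (b2 p q)))
    (p q : Fin n × Fin n × Fin n) :
    Filter.Tendsto (fun t => comb3 (A t) (B t) (C t) (A2 t) (C2 t) (B2 t) p q) F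
      (nhds (comb3 a b c a2 c2 b2 p q)) := by
  simp only [comb3_apply]
  exact ((((tendsto_finset_sum _ fun k _ => (hA _ _).mul (hB _ _)).sub
           (tendsto_finset_sum _ fun k _ => (hB _ _).mul (hA _ _))).add
         ((tendsto_finset_sum _ fun k _ => (hA2 _ _).mul (hC _ _)).sub
           (tendsto_finset_sum _ fun k _ => (hC _ _).mul (hA2 _ _)))).add
         ((tendsto_finset_sum _ fun k _ => (hB2 _ _).mul (hC2 _ _)).sub
           (tendsto_finset_sum _ fun k _ => (hC2 _ _).mul (hB2 _ _))))

lemma tendsto_double : Filter.Tendsto (fun t : ℂ => 2*t)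
    (nhdsWithin 0 {(0:ℂ)}ᶜ) (nhdsWithin 0 {(0:ℂ)}ᶜ) := by
  rw [tendsto_nhdsWithin_iff]
  constructor
  · have h : Filter.Tendsto (fun t : ℂ => 2*t) (nhds 0) (nhds 0) := by
      simpa using (continuous_mul_left (2:ℂ)).tendsto (0:ℂ)
    exact h.mono_left nhdsWithin_le_nhds
  · filter_upwards [self_mem_nhdsWithin] with t ht
    simp only [Set.mem_compl_iff, Set.mem_singleton_iff] at *
    exact mul_ne_zero two_ne_zero ht

lemma tendsto_negp : Filter.Tendsto (fun t : ℂ => -t)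
    (nhdsWithin 0 {(0:ℂ)}ᶜ) (nhdsWithin 0 {(0:ℂ)}ᶜ) := by
  rw [tendsto_nhdsWithin_iff]
  constructor
  · have h : Filter.Tendsto (fun t : ℂ => -t) (nhds 0) (nhds 0) := by
      simpa using continuous_neg.tendsto (0:ℂ)
    exact h.mono_left nhdsWithin_le_nhds
  · filter_upwards [self_mem_nhdsWithin] with t ht
    simp only [Set.mem_compl_iff, Set.mem_singleton_iff] at *
    exact neg_ne_zero.mpr ht

lemma flipT_flipT (x : M2 n) : flipT (flipT x) = x := rfl
lemma flipT_neg (x : M2 n) : flipT (-x) = - flipT x := rfl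

lemma prpr_neg (x : M2 n) : prpr (-x) = - prpr x := by
  funext p q
  simp only [prpr, Matrix.neg_apply, Finset.sum_neg_distrib]
  ring

lemma prpr_flip (x : M2 n) : prpr (flipT x) = flipT (prpr x) := by
  funext p q
  simp only [prpr, flipT]
  rw [Finset.sum_comm (f := fun m l => x (m, l) (m, l))]
  ring


/-- If `r` is a unitary AYBE solution and
`r̄(v) = lim_{u→0} (pr⊗pr) r(u,v)` exists, then `r̄` is a unitary solution of the CYBE
with spectral parameter. -/
theorem projected_limit_is_cybe (n : ℕ) (hn : 2 ≤ n) (r : ℂ → ℂ → M2 n)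
    (hAYBE : ∀ u u' v v' : ℂ, aybeLHS r u u' v v' = 0)
    (hUnit : Unitary2 r)
    (rbar : ℂ → M2 n)
    (hlim : ∀ v : ℂ, ∀ p q : Fin n × Fin n,
      Filter.Tendsto (fun u : ℂ => prpr (r u v) p q)
        (nhdsWithin 0 {(0 : ℂ)}ᶜ) (nhds (rbar v p q))) :
    (∀ v v' : ℂ, cybeLHS rbar v v' = 0) ∧
    (∀ v : ℂ, flipT (rbar (-v)) = - rbar v) := by
  constructor
  · intro v v'
    funext p q
    have hzero : ∀ t : ℂ,
        comb3 (prpr (r t v)) (prpr (r t (v+v'))) (prpr (r t v'))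
          (prpr (r (2*t) v)) (prpr (r (-t) v')) (prpr (r (2*t) (v+v'))) = 0 := by
      intro t
      have hphi := phi_zero r hAYBE hUnit (2*t) t v v'
      rw [show (2*t - t : ℂ) = t from by ring, show (t - 2*t : ℂ) = -t from by ring] at hphi
      unfold comb3
      rw [lemA, lemB, lemC, ← PiP_add, ← PiP_add, hphi, PiP_zero]
    have hTend := comb3_tendsto
      (fun t => prpr (r t v)) (fun t => prpr (r t (v+v'))) (fun t => prpr (r t v'))
      (fun t => prpr (r (2*t) v)) (fun t => prpr (r (-t) v')) (fun t => prpr (r (2*t) (v+v')))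
      (rbar v) (rbar (v+v')) (rbar v') (rbar v) (rbar v') (rbar (v+v'))
      (hlim v) (hlim (v+v')) (hlim v')
      (fun p q => (hlim v p q).comp tendsto_double)
      (fun p q => (hlim v' p q).comp tendsto_negp)
      (fun p q => (hlim (v+v') p q).comp tendsto_double)
      p q
    have hconst : Filter.Tendsto
        (fun t : ℂ => comb3 (prpr (r t v)) (prpr (r t (v+v'))) (prpr (r t v'))
          (prpr (r (2*t) v)) (prpr (r (-t) v')) (prpr (r (2*t) (v+v'))) p q)
        (nhdsWithin 0 {(0:ℂ)}ᶜ) (nhds 0) := by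
      simp only [hzero, Matrix.zero_apply]
      exact tendsto_const_nhds
    have hc : cybeLHS rbar v v'
        = comb3 (rbar v) (rbar (v+v')) (rbar v') (rbar v) (rbar v') (rbar (v+v')) := rfl
    rw [hc, Matrix.zero_apply]
    exact tendsto_nhds_unique hTend hconst
  · intro v
    funext p q
    have h1 := hlim (-v) (p.2, p.1) (q.2, q.1)
    have hr : ∀ u : ℂ, r u (-v) = - flipT (r (-u) v) := by
      intro u
      have h := hUnit (-u) v
      rw [neg_neg] at h
      have h2 := congrArg flipT h
      rwa [flipT_flipT, flipT_neg] at h2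
    have heq : ∀ u : ℂ, prpr (r u (-v)) (p.2, p.1) (q.2, q.1) = - prpr (r (-u) v) p q := by
      intro u
      rw [hr u, prpr_neg, prpr_flip]
      simp [Matrix.neg_apply, flipT]
    simp only [heq] at h1
    have h2 : Filter.Tendsto (fun u : ℂ => - prpr (r (-u) v) p q)
        (nhdsWithin 0 {(0:ℂ)}ᶜ) (nhds (- rbar v p q)) :=
      ((hlim v p q).comp tendsto_negp).neg
    have := tendsto_nhds_unique h1 h2
    simpa [flipT, Matrix.neg_apply] using this
end

section
/- Let (Γ_1,Γ_2,T) be a BD triple and s ∈ h∧h admissible, and write s = Σ_{i,k} s^{ik}_{ik} e_{ii}⊗e_{kk}. Then the GGS matrix can be rewritten as R_GGS(q) = (q − q^{−1})[ Σ_{α>0} e_{−α}⊗e_α + Σ_{α=e_i−e_j ≺ β=e_k−e_l} (−1)^{C_{α,β}(|α|−1)} ( q^{−C_{α,β}(|α|−1) + s^{ik}_{ik} + s^{jl}_{jl} − 1} e_{−α}⊗e_β − q^{C_{α,β}(|α|−1) + 1 − s^{ik}_{ik} − s^{jl}_{jl}} e_β⊗e_{−α} ) ] + q^{Σ_i e_{ii}⊗e_{ii}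 + 2s}. -/
open Complex

/-! ### Belavin–Drinfeld combinatorics (0-based indexing: simple roots `α_a = e_a - e_{a+1}`,
`a ∈ {0,…,n-2}`; the positive root `e_i - e_j` (`i < j < n`) is encoded by the pair `(i,j)`). -/

/-- inner product of simple roots `α_a, α_b` in type `A`. -/
def ipS (a b : ℕ) : ℤ := if a = b then 2 else if a + 1 = b ∨ b + 1 = a then -1 else 0

/-- A Belavin–Drinfeld triple `(Γ₁, Γ₂, T)` of type `A_{n-1}` (simple roots 0-based). -/
structure BDTriple (n : ℕ) where
  G1 : Finset ℕ
  G2 : Finset ℕ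
  hG1 : ∀ a ∈ G1, a + 1 < n
  hG2 : ∀ a ∈ G2, a + 1 < n
  T : ℕ → ℕ
  Tmem : ∀ a ∈ G1, T a ∈ G2
  Tinj : ∀ a ∈ G1, ∀ b ∈ G1, T a = T b → a = b
  Tsurj : ∀ b ∈ G2, ∃ a ∈ G1, T a = b
  Tip : ∀ a ∈ G1, ∀ b ∈ G1, ipS (T a) (T b) = ipS a b
  Tnil : ∀ a ∈ G1, ∃ k : ℕ, T^[k] a ∉ G1

/-- `(i,j)` encodes the positive root `e_i - e_j`. -/
def IsRoot (n : ℕ) (p : ℕ × ℕ) : Prop := p.1 < p.2 ∧ p.2 < n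

/-- One application of (the additive extension of) `T` sends the root `p` to the root `q`:
all simple constituents of `p` lie in `Γ₁` and their `T`-images form the segment of `q`. -/
def step {n : ℕ} (D : BDTriple n) (p q : ℕ × ℕ) : Prop :=
  IsRoot n p ∧ IsRoot n q ∧ (Finset.Ico p.1 p.2 ⊆ D.G1) ∧
    Finset.image D.T (Finset.Ico p.1 p.2) = Finset.Ico q.1 q.2

/-- `stepIter D k p q` means `T^k p = q` (all intermediate iterates being defined). -/
def stepIter {n : ℕ} (D : BDTriple n) : ℕ → ℕ × ℕ → ℕ × ℕ → Prop
  | 0, p, q => p = q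
  | k + 1, p, q => ∃ r, step D p r ∧ stepIter D k r q

/-- `α ≺ β` : `T^k α = β` for some `k ≥ 1`. -/
def prec {n : ℕ} (D : BDTriple n) (p q : ℕ × ℕ) : Prop := ∃ k : ℕ, stepIter D (k + 1) p q

/-- a single oriented step: `c = false` if `T` preserves orientation on `p`
(`T` sends the leftmost simple root of `p` to the leftmost one of `q`), `c = true` if
it reverses orientation. -/
def stepO {n : ℕ} (D : BDTriple n) (p q : ℕ × ℕ) (c : Bool) : Prop :=
  step D p q ∧ (if c then D.T p.1 = q.2 - 1 else D.T p.1 = q.1)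

/-- `stepIterO D k p q c` : `T^k p = q`, with total orientation reversal given by `c`. -/
def stepIterO {n : ℕ} (D : BDTriple n) : ℕ → ℕ × ℕ → ℕ × ℕ → Bool → Prop
  | 0, p, q, c => p = q ∧ c = false
  | k + 1, p, q, c => ∃ r b d, stepO D p r b ∧ stepIterO D k r q d ∧ c = xor b d

/-- the triple preserves orientation: `C_{α,β} = 0` for all `α ≺ β`. -/
def OrientPres {n : ℕ} (D : BDTriple n) : Prop :=
  ∀ p q : ℕ × ℕ, ∀ k : ℕ, stepIter D (k + 1) p q → stepIterO D (k + 1) p q false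

/-- a choice `CC` of the orientation data `C_{α,β}` for all `α ≺ β`. -/
def CCSpec {n : ℕ} (D : BDTriple n) (CC : ℕ × ℕ → ℕ × ℕ → Bool) : Prop :=
  ∀ p q : ℕ × ℕ, prec D p q → ∃ k : ℕ, 1 ≤ k ∧ stepIterO D k p q (CC p q)

/-- `C_{α,β}·(|α|-1)` as a natural number, given the orientation data `CC`. -/
def Cnum (CC : ℕ × ℕ → ℕ × ℕ → Bool) (p q : ℕ × ℕ) : ℕ :=
  cond (CC p q) (p.2 - p.1 - 1) 0

/-- a permutation of `Fin n` as a map on `ℕ`. -/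
def pv {n : ℕ} (σ : Equiv.Perm (Fin n)) (m : ℕ) : ℕ := if h : m < n then (σ ⟨m, h⟩ : ℕ) else m

/-- `σ` is a cyclic permutation of `{0,…,n-1}` (a single `n`-cycle). -/
def IsCyclic' {n : ℕ} (σ : Equiv.Perm (Fin n)) : Prop := ∀ i j : Fin n, ∃ k : ℕ, (σ ^ k) i = j

/-- `σ = T̃` is compatible with `T`: `T(α_a) = α_b` implies `T̃ a = b` and `T̃ (a+1) = b+1`. -/
def Compat {n : ℕ} (D : BDTriple n) (σ : Equiv.Perm (Fin n)) : Prop :=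
  ∀ a ∈ D.G1, pv σ a = D.T a ∧ pv σ (a + 1) = D.T a + 1

/-- `OO i j` is the least `k ≥ 0` with `T̃^k i = j`. -/
def OSpec {n : ℕ} (σ : Equiv.Perm (Fin n)) (OO : ℕ → ℕ → ℕ) : Prop :=
  ∀ i j : ℕ, i < n → j < n →
    (pv σ)^[OO i j] i = j ∧ ∀ m < OO i j, (pv σ)^[m] i ≠ j

/-- the finset of positive roots. -/
def roots (n : ℕ) : Finset (ℕ × ℕ) :=
  (Finset.range n ×ˢ Finset.range n).filter fun p => p.1 < p.2

open scoped Classical in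
/-- the finset of pairs `(α, β)` of positive roots with `α ≺ β`. -/
noncomputable def precPairs {n : ℕ} (D : BDTriple n) : Finset ((ℕ × ℕ) × (ℕ × ℕ)) :=
  (roots n ×ˢ roots n).filter fun x => prec D x.1 x.2

/-- the standard part `r_st = ½ Σ_i e_ii ⊗ e_ii + Σ_{α>0} e_{-α} ⊗ e_α`. -/
noncomputable def rstMat (n : ℕ) : M2 n :=
  (1 / 2 : ℂ) • ∑ i ∈ Finset.range n, tens (Eu n i i) (Eu n i i)
    + ∑ p ∈ roots n, tens (Eu n p.2 p.1) (Eu n p.1 p.2)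

/-- `a = Σ_{α≺β} (-1)^{C_{α,β}(|α|-1)} (e_{-α} ⊗ e_β - e_β ⊗ e_{-α})`. -/
noncomputable def aMat {n : ℕ} (D : BDTriple n) (CC : ℕ × ℕ → ℕ × ℕ → Bool) : M2 n :=
  ∑ x ∈ precPairs D,
    ((-1 : ℂ) ^ Cnum CC x.1 x.2) •
      (tens (Eu n x.1.2 x.1.1) (Eu n x.2.1 x.2.2) - tens (Eu n x.2.1 x.2.2) (Eu n x.1.2 x.1.1))

/-- the diagonal part `s = Σ_{i,k} s_{ik} e_ii ⊗ e_kk` as an element of `h ⊗ h`. -/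
noncomputable def sMat (n : ℕ) (s : ℕ → ℕ → ℂ) : M2 n :=
  ∑ i ∈ Finset.range n, ∑ k ∈ Finset.range n, s i k • tens (Eu n i i) (Eu n k k)

/-- `s ∈ h ∧ h` satisfies the Belavin–Drinfeld equations
`[(α - Tα) ⊗ 1] s = ½ [(α + Tα) ⊗ 1] P⁰` for all `α ∈ Γ₁`. -/
def Admissible {n : ℕ} (D : BDTriple n) (s : ℕ → ℕ → ℂ) : Prop :=
  (∀ i k : ℕ, s k i = - s i k) ∧
  ∀ a ∈ D.G1, ∀ k < n,
    (s a k - s (a + 1) k) - (s (D.T a) k - s (D.T a + 1) k)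
      = (1 / 2 : ℂ) * ((if a = k then 1 else 0) - (if a + 1 = k then 1 else 0)
          + (if D.T a = k then 1 else 0) - (if D.T a + 1 = k then 1 else 0))

/-- the classical `r`-matrix `r_{T,s} = s + a + r_st`. -/
noncomputable def rTs {n : ℕ} (D : BDTriple n) (CC : ℕ × ℕ → ℕ × ℕ → Bool)
    (s : ℕ → ℕ → ℂ) : M2 n :=
  sMat n s + aMat D CC + rstMat n

open scoped Classical in
/-- the combinatorial constant `PS(α, β)`. -/
noncomputable def PS {n : ℕ} (D : BDTriple n) (p q : ℕ × ℕ) : ℂ :=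
  (1 / 2 : ℂ) * ((if p.2 = q.1 then 1 else 0) + (if q.2 = p.1 then 1 else 0))
    + (if ∃ g : ℕ × ℕ, prec D p g ∧ prec D g q ∧ p.2 = g.1 then 1 else 0)
    + (if ∃ g : ℕ × ℕ, prec D p g ∧ prec D g q ∧ g.2 = p.1 then 1 else 0)

/-- `q^x = e^{ux/2}` where `q = e^{u/2}`. -/
noncomputable def qp (u x : ℂ) : ℂ := Complex.exp (u * x / 2)

/-- `q^M = e^{(u/2)M}` for a diagonal `M ∈ h ⊗ h` with entries `f i k`. -/
noncomputable def qMat (n : ℕ) (u : ℂ) (f : ℕ → ℕ → ℂ) : M2 n :=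
  fun p q => if p = q then Complex.exp (u / 2 * f p.1 p.2) else 0

/-- the standard quantum `R`-matrix `R_st`. -/
noncomputable def RstMat (n : ℕ) (u : ℂ) : M2 n :=
  qp u 1 • ∑ i ∈ Finset.range n, tens (Eu n i i) (Eu n i i)
    + ∑ i ∈ Finset.range n, ∑ j ∈ Finset.range n,
        (if i ≠ j then (1 : ℂ) else 0) • tens (Eu n i i) (Eu n j j)
    + (qp u 1 - qp u (-1)) • ∑ p ∈ roots n, tens (Eu n p.2 p.1) (Eu n p.1 p.2)

/-- the GGS matrix `R_GGS(q)`, `q = e^{u/2}`. -/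
noncomputable def RGGS {n : ℕ} (D : BDTriple n) (CC : ℕ × ℕ → ℕ × ℕ → Bool)
    (s : ℕ → ℕ → ℂ) (u : ℂ) : M2 n :=
  qMat n u s *
    (RstMat n u + (qp u 1 - qp u (-1)) •
      ∑ x ∈ precPairs D,
        ((-1 : ℂ) ^ Cnum CC x.1 x.2) •
          (qp u (-(Cnum CC x.1 x.2 : ℂ) - PS D x.1 x.2) •
              tens (Eu n x.1.2 x.1.1) (Eu n x.2.1 x.2.2)
            - qp u ((Cnum CC x.1 x.2 : ℂ) + PS D x.1 x.2) •
              tens (Eu n x.2.1 x.2.2) (Eu n x.1.2 x.1.1))) *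
  qMat n u s

/-- the coefficients of `(pr ⊗ pr) s` for `s ∈ h ⊗ h`. -/
noncomputable def s0fun (n : ℕ) (s : ℕ → ℕ → ℂ) (i k : ℕ) : ℂ :=
  s i k - (1 / (n : ℂ)) * (∑ m ∈ Finset.range n, s m k)
    - (1 / (n : ℂ)) * (∑ m ∈ Finset.range n, s i m)
    + (1 / (n : ℂ)) ^ 2 * ∑ m ∈ Finset.range n, ∑ l ∈ Finset.range n, s m l


/-! ### Auxiliary combinatorial lemmas -/

section AuxComb

variable {n : ℕ} {D : BDTriple n}

lemma step_len {p q : ℕ × ℕ} (h : step D p q) : q.2 - q.1 = p.2 - p.1 := by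
  obtain ⟨hp, hq, hsub, himg⟩ := h
  have hinj : Set.InjOn D.T (Finset.Ico p.1 p.2) := fun a ha b hb hab =>
    D.Tinj a (hsub ha) b (hsub hb) hab
  have hc := Finset.card_image_of_injOn hinj
  rw [himg, Nat.card_Ico, Nat.card_Ico] at hc
  exact hc

lemma Ico_eq_iff {a b c d : ℕ} (hab : a < b) (hcd : c < d)
    (h : Finset.Ico a b = Finset.Ico c d) : a = c ∧ b = d := by
  have h1 : a ∈ Finset.Ico c d := h ▸ Finset.mem_Ico.2 ⟨le_refl a, hab⟩
  have h2 : c ∈ Finset.Ico a b := h.symm ▸ Finset.mem_Ico.2 ⟨le_refl c, hcd⟩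
  have h3 : b - 1 ∈ Finset.Ico c d := h ▸ Finset.mem_Ico.2 ⟨by omega, by omega⟩
  have h4 : d - 1 ∈ Finset.Ico a b := h.symm ▸ Finset.mem_Ico.2 ⟨by omega, by omega⟩
  simp only [Finset.mem_Ico] at h1 h2 h3 h4
  omega

lemma step_det {p q r : ℕ × ℕ} (h1 : step D p q) (h2 : step D p r) : q = r := by
  have he := h1.2.2.2.symm.trans h2.2.2.2
  have h3 := Ico_eq_iff h1.2.1.1 h2.2.1.1 he
  exact Prod.ext_iff.2 h3

lemma stepIter_trans {a b : ℕ} {p r q : ℕ × ℕ} (h1 : stepIter D a p r)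
    (h2 : stepIter D b r q) : stepIter D (a + b) p q := by
  induction a generalizing p with
  | zero => rw [Nat.zero_add]; exact h1 ▸ h2
  | succ a ih =>
    rw [Nat.succ_add]
    obtain ⟨r', hst, hit⟩ := h1
    exact ⟨r', hst, ih hit⟩

lemma stepIter_split {a b : ℕ} {p q : ℕ × ℕ} (h : stepIter D (a + b) p q) :
    ∃ r, stepIter D a p r ∧ stepIter D b r q := by
  induction a generalizing p with
  | zero => exact ⟨p, rfl, by rwa [Nat.zero_add] at h⟩
  | succ a ih =>
    rw [Nat.succ_add] at h
    obtain ⟨r', hst, hit⟩ := h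
    obtain ⟨r, ha, hb⟩ := ih hit
    exact ⟨r, ⟨r', hst, ha⟩, hb⟩

lemma stepIter_det {k : ℕ} {p q r : ℕ × ℕ} (h1 : stepIter D k p q)
    (h2 : stepIter D k p r) : q = r := by
  induction k generalizing p with
  | zero => exact h1.symm.trans h2
  | succ k ih =>
    obtain ⟨a, ha, ha'⟩ := h1
    obtain ⟨b, hb, hb'⟩ := h2
    obtain rfl : a = b := step_det ha hb
    exact ih ha' hb'

lemma stepIter_len {k : ℕ} {p q : ℕ × ℕ} (h : stepIter D k p q) :
    q.2 - q.1 = p.2 - p.1 := by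
  induction k generalizing p with
  | zero => rw [h]
  | succ k ih =>
    obtain ⟨r, hst, hit⟩ := h
    rw [ih hit, step_len hst]

lemma stepIter_isRoot {k : ℕ} {p q : ℕ × ℕ} (hk : 1 ≤ k) (h : stepIter D k p q) :
    IsRoot n p ∧ IsRoot n q := by
  induction k generalizing p with
  | zero => omega
  | succ k ih =>
    obtain ⟨r, hst, hit⟩ := h
    rcases Nat.eq_zero_or_pos k with rfl | hk'
    · exact ⟨hst.1, hit ▸ hst.2.1⟩
    · exact ⟨hst.1, (ih hk' hit).2⟩

lemma stepIter_mem {k : ℕ} {p q : ℕ × ℕ} (h : stepIter D k p q) {a : ℕ}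
    (ha : a ∈ Finset.Ico p.1 p.2) :
    D.T^[k] a ∈ Finset.Ico q.1 q.2 ∧ ∀ t < k, D.T^[t] a ∈ D.G1 := by
  induction k generalizing p a with
  | zero => exact ⟨h ▸ ha, fun t ht => absurd ht (Nat.not_lt_zero t)⟩
  | succ k ih =>
    obtain ⟨r, hst, hit⟩ := h
    have haG : a ∈ D.G1 := hst.2.2.1 ha
    have hTa : D.T a ∈ Finset.Ico r.1 r.2 := by
      rw [← hst.2.2.2]; exact Finset.mem_image_of_mem _ ha
    have hrec := ih hit hTa
    constructor
    · rw [Function.iterate_succ_apply]; exact hrec.1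
    · intro t ht
      cases t with
      | zero => simpa using haG
      | succ t => rw [Function.iterate_succ_apply]; exact hrec.2 t (by omega)

lemma no_cycle {k : ℕ} {p : ℕ × ℕ} (hk : 1 ≤ k) (h : stepIter D k p p) : False := by
  have hr : IsRoot n p := (stepIter_isRoot hk h).1
  have hmul : ∀ j : ℕ, stepIter D (j * k) p p := by
    intro j
    induction j with
    | zero => rw [Nat.zero_mul]; exact rfl
    | succ j ih => rw [Nat.succ_mul]; exact stepIter_trans ih h
  have hmem : p.1 ∈ Finset.Ico p.1 p.2 := Finset.mem_Ico.2 ⟨le_refl _, hr.1⟩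
  have hG : ∀ t : ℕ, D.T^[t] p.1 ∈ D.G1 := by
    intro t
    have hlt : t < (t + 1) * k := by nlinarith
    exact (stepIter_mem (hmul (t + 1)) hmem).2 t hlt
  obtain ⟨m, hm⟩ := D.Tnil p.1 (by simpa using hG 0)
  exact hm (hG m)

lemma exists_chain {k : ℕ} {p q : ℕ × ℕ} (h : stepIter D k p q) :
    ∃ c : ℕ → ℕ × ℕ, c 0 = p ∧ c k = q ∧ ∀ m < k, step D (c m) (c (m + 1)) := by
  induction k generalizing p with
  | zero => exact ⟨fun _ => p, rfl, h, fun m hm => absurd hm (by omega)⟩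
  | succ k ih =>
    obtain ⟨r, hst, hit⟩ := h
    obtain ⟨c, hc0, hck, hcs⟩ := ih hit
    refine ⟨fun m => if m = 0 then p else c (m - 1), by simp, by simpa using hck, ?_⟩
    intro m hm
    cases m with
    | zero => simpa [hc0] using hst
    | succ m => simpa using hcs m (by omega)

lemma chain_stepIter {k : ℕ} {c : ℕ → ℕ × ℕ} (hc : ∀ m < k, step D (c m) (c (m + 1)))
    (a t : ℕ) (h : a + t ≤ k) : stepIter D t (c a) (c (a + t)) := by
  induction t generalizing a with
  | zero => rfl
  | succ t ih =>
    refine ⟨c (a + 1), hc a (by omega), ?_⟩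
    have h' : a + (t + 1) = (a + 1) + t := by omega
    rw [h']
    exact ih (a + 1) (by omega)

lemma telesc (g : ℕ → ℂ) : ∀ (j i : ℕ), i ≤ j →
    ∑ a ∈ Finset.Ico i j, (g a - g (a + 1)) = g i - g j := by
  intro j
  induction j with
  | zero =>
    intro i h
    have : i = 0 := by omega
    subst this; simp
  | succ j ih =>
    intro i h
    rcases Nat.eq_or_lt_of_le h with heq | h'
    · subst heq; simp
    · have hij : i ≤ j := by omega
      rw [Finset.sum_Ico_succ_top hij, ih i hij]; ring

end AuxComb


/-! ### Admissibility and the key `PS` identity -/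

/-- `(α ⊗ β)s` for roots `p = α`, `g = β`. -/
noncomputable def FF (s : ℕ → ℕ → ℂ) (p g : ℕ × ℕ) : ℂ :=
  s p.1 g.1 - s p.1 g.2 - s p.2 g.1 + s p.2 g.2

/-- `(γ ⊗ α)P⁰` for roots `g = γ`, `p = α`. -/
noncomputable def P0 (g p : ℕ × ℕ) : ℂ :=
  (if g.1 = p.1 then (1 : ℂ) else 0) - (if g.1 = p.2 then 1 else 0)
    - (if g.2 = p.1 then 1 else 0) + (if g.2 = p.2 then 1 else 0)

section AuxAdm

variable {n : ℕ} {D : BDTriple n} {s : ℕ → ℕ → ℂ}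

lemma admis_step (hs : Admissible D s) {p r : ℕ × ℕ} (hst : step D p r)
    {m : ℕ} (hm : m < n) :
    (s p.1 m - s p.2 m) - (s r.1 m - s r.2 m)
      = (1 / 2 : ℂ) * (((if p.1 = m then (1 : ℂ) else 0) - (if p.2 = m then 1 else 0))
          + ((if r.1 = m then (1 : ℂ) else 0) - (if r.2 = m then 1 else 0))) := by
  obtain ⟨hp, hr, hsub, himg⟩ := hst
  have hinj : ∀ x ∈ Finset.Ico p.1 p.2, ∀ y ∈ Finset.Ico p.1 p.2, D.T x = D.T y → x = y :=
    fun x hx y hy => D.Tinj x (hsub hx) y (hsub hy)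
  have hp' : p.1 ≤ p.2 := hp.1.le
  have hr' : r.1 ≤ r.2 := hr.1.le
  have hsum := Finset.sum_congr rfl (fun a ha => hs.2 a (hsub ha) m hm)
  have hT : ∑ a ∈ Finset.Ico p.1 p.2, (s (D.T a) m - s (D.T a + 1) m)
      = s r.1 m - s r.2 m := by
    rw [← Finset.sum_image (f := fun b => s b m - s (b + 1) m) hinj, himg]
    exact telesc (fun a => s a m) _ _ hr'
  have hTI : ∑ a ∈ Finset.Ico p.1 p.2,
      ((if D.T a = m then (1 : ℂ) else 0) - (if D.T a + 1 = m then 1 else 0))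
      = (if r.1 = m then (1 : ℂ) else 0) - (if r.2 = m then 1 else 0) := by
    rw [← Finset.sum_image (f := fun b => (if b = m then (1 : ℂ) else 0)
      - (if b + 1 = m then 1 else 0)) hinj, himg]
    exact telesc (fun a => if a = m then (1 : ℂ) else 0) _ _ hr'
  have e1 : ∑ a ∈ Finset.Ico p.1 p.2,
      ((s a m - s (a + 1) m) - (s (D.T a) m - s (D.T a + 1) m))
      = (s p.1 m - s p.2 m) - (s r.1 m - s r.2 m) := by
    rw [Finset.sum_sub_distrib, telesc (fun a => s a m) _ _ hp', hT]
  have e2 : ∑ a ∈ Finset.Ico p.1 p.2,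
      ((1 / 2 : ℂ) * ((if a = m then (1 : ℂ) else 0) - (if a + 1 = m then 1 else 0)
          + (if D.T a = m then 1 else 0) - (if D.T a + 1 = m then 1 else 0)))
      = (1 / 2 : ℂ) * (((if p.1 = m then (1 : ℂ) else 0) - (if p.2 = m then 1 else 0))
          + ((if r.1 = m then (1 : ℂ) else 0) - (if r.2 = m then 1 else 0))) := by
    have hcg : ∀ a ∈ Finset.Ico p.1 p.2,
        (1 / 2 : ℂ) * ((if a = m then (1 : ℂ) else 0) - (if a + 1 = m then 1 else 0)
          + (if D.T a = m then 1 else 0) - (if D.T a + 1 = m then 1 else 0))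
        = (1 / 2 : ℂ) * ((if a = m then (1 : ℂ) else 0) - (if a + 1 = m then 1 else 0))
          + (1 / 2 : ℂ) * ((if D.T a = m then (1 : ℂ) else 0)
            - (if D.T a + 1 = m then 1 else 0)) := fun a _ => by ring
    rw [Finset.sum_congr rfl hcg, Finset.sum_add_distrib, ← Finset.mul_sum, ← Finset.mul_sum,
      telesc (fun a => if a = m then (1 : ℂ) else 0) _ _ hp', hTI]
    ring
  rw [← e1, hsum, e2]

lemma F_step (hs : Admissible D s) {g r : ℕ × ℕ} (hst : step D g r) {p : ℕ × ℕ}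
    (h1 : p.1 < n) (h2 : p.2 < n) :
    FF s p g - FF s p r = -(1 / 2 : ℂ) * (P0 g p + P0 r p) := by
  have hA := admis_step hs hst h1
  have hB := admis_step hs hst h2
  unfold FF P0
  rw [hs.1 g.1 p.1, hs.1 g.2 p.1, hs.1 g.1 p.2, hs.1 g.2 p.2,
    hs.1 r.1 p.1, hs.1 r.2 p.1, hs.1 r.1 p.2, hs.1 r.2 p.2]
  linear_combination -hA + hB

open scoped Classical in
lemma keyPS (hs : Admissible D s) {p q : ℕ × ℕ} (hpq : prec D p q) :
    s p.1 q.2 + s p.2 q.1 - s p.1 q.1 - s p.2 q.2 = PS D p q - 1 := by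
  obtain ⟨k0, hch⟩ := hpq
  obtain ⟨hpr, hqr⟩ := stepIter_isRoot (by omega) hch
  have hp1n : p.1 < n := lt_trans hpr.1 hpr.2
  obtain ⟨c, hc0, hck, hcs⟩ := exists_chain hch
  have hstep_t : ∀ a t, a + t ≤ k0 + 1 → stepIter D t (c a) (c (a + t)) :=
    chain_stepIter hcs
  have hfrom0 : ∀ t, t ≤ k0 + 1 → stepIter D t p (c t) := by
    intro t ht
    have := hstep_t 0 t (by omega)
    rwa [hc0, Nat.zero_add] at this
  -- telescoping
  have htel : ∑ m ∈ Finset.range (k0 + 1), (FF s p (c m) - FF s p (c (m + 1)))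
      = FF s p (c 0) - FF s p (c (k0 + 1)) :=
    Finset.sum_range_sub' (fun m => FF s p (c m)) (k0 + 1)
  have hterm : ∀ m ∈ Finset.range (k0 + 1),
      FF s p (c m) - FF s p (c (m + 1)) = -(1 / 2 : ℂ) * (P0 (c m) p + P0 (c (m + 1)) p) :=
    fun m hm => F_step hs (hcs m (Finset.mem_range.1 hm)) hp1n hpr.2
  rw [Finset.sum_congr rfl hterm, hc0, hck] at htel
  have hFpp : FF s p p = 0 := by
    unfold FF
    linear_combination (1 / 2 : ℂ) * hs.1 p.1 p.1 + (1 / 2 : ℂ) * hs.1 p.2 p.2 - hs.1 p.2 p.1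
  set S : ℂ := ∑ i ∈ Finset.range k0, P0 (c (i + 1)) p with hSdef
  have s1 : ∑ m ∈ Finset.range (k0 + 1), P0 (c m) p = P0 p p + S := by
    rw [Finset.sum_range_succ', hc0, hSdef]; ring
  have s2 : ∑ m ∈ Finset.range (k0 + 1), P0 (c (m + 1)) p = S + P0 q p := by
    rw [Finset.sum_range_succ, hck, hSdef]
  have hP0pp : P0 p p = 2 := by
    unfold P0
    rw [if_pos rfl, if_pos rfl, if_neg (Nat.ne_of_lt hpr.1),
      if_neg (Ne.symm (Nat.ne_of_lt hpr.1))]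
    ring
  have hF : FF s p q = 1 + S + (1 / 2 : ℂ) * P0 q p := by
    have expand : ∑ m ∈ Finset.range (k0 + 1),
        (-(1 / 2 : ℂ) * (P0 (c m) p + P0 (c (m + 1)) p))
        = -(1 / 2 : ℂ) * ((P0 p p + S) + (S + P0 q p)) := by
      rw [← Finset.mul_sum, Finset.sum_add_distrib, s1, s2]
    rw [expand, hFpp, hP0pp] at htel
    linear_combination htel
  -- facts about the chain
  have hlen : ∀ t, t ≤ k0 + 1 → (c t).2 - (c t).1 = p.2 - p.1 :=
    fun t ht => stepIter_len (hfrom0 t ht)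
  have hroot_t : ∀ t, t ≤ k0 + 1 → IsRoot n (c t) := by
    intro t ht
    rcases Nat.eq_zero_or_pos t with rfl | ht'
    · rw [hc0]; exact hpr
    · exact (stepIter_isRoot ht' (hfrom0 t ht)).2
  have hdist : ∀ t t', t < t' → t' ≤ k0 + 1 → c t ≠ c t' := by
    intro t t' h1 h2 heq
    have hst : stepIter D (t' - t) (c t) (c t') := by
      have := hstep_t t (t' - t) (by omega)
      rwa [show t + (t' - t) = t' by omega] at this
    rw [heq] at hst
    exact no_cycle (by omega) hst
  have eqfst : ∀ g g' : ℕ × ℕ, g.1 < g.2 → g'.1 < g'.2 → g.2 - g.1 = g'.2 - g'.1 →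
      g.1 = g'.1 → g = g' := by
    intro g g' h1 h2 h3 h4
    exact Prod.ext_iff.2 ⟨h4, by omega⟩
  have eqsnd : ∀ g g' : ℕ × ℕ, g.1 < g.2 → g'.1 < g'.2 → g.2 - g.1 = g'.2 - g'.1 →
      g.2 = g'.2 → g = g' := by
    intro g g' h1 h2 h3 h4
    exact Prod.ext_iff.2 ⟨by omega, h4⟩
  have hq_ne : q ≠ p := by
    intro h
    exact no_cycle (k := k0 + 1) (by omega) (h ▸ hch)
  have hmid_prec : ∀ i, i < k0 → prec D p (c (i + 1)) ∧ prec D (c (i + 1)) q := by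
    intro i hi
    constructor
    · exact ⟨i, hfrom0 (i + 1) (by omega)⟩
    · refine ⟨k0 - i - 1, ?_⟩
      have h2 := hstep_t (i + 1) (k0 - i) (by omega)
      rw [show (i + 1) + (k0 - i) = k0 + 1 by omega, hck] at h2
      rwa [show k0 - i - 1 + 1 = k0 - i by omega]
  have hg_mid : ∀ g, prec D p g → prec D g q → ∃ i, i < k0 ∧ c (i + 1) = g := by
    rintro g ⟨a, hga⟩ ⟨b, hgb⟩
    by_cases hle : a + 1 ≤ k0
    · exact ⟨a, by omega, stepIter_det (hfrom0 (a + 1) (by omega)) hga⟩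
    · exfalso
      have hga' : stepIter D (k0 + 1 + (a - k0)) p g := by
        rwa [show k0 + 1 + (a - k0) = a + 1 by omega]
      obtain ⟨r, hr1, hr2⟩ := stepIter_split hga'
      obtain rfl : r = q := stepIter_det hr1 hch
      exact no_cycle (by omega) (stepIter_trans hr2 hgb)
  -- the four indicator computations
  have hA1 : (∃ g : ℕ × ℕ, prec D p g ∧ prec D g q ∧ p.2 = g.1) →
      ∑ i ∈ Finset.range k0, (if (c (i + 1)).1 = p.2 then (1 : ℂ) else 0) = 1 := by
    rintro ⟨g, hg1, hg2, hg3⟩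
    obtain ⟨i0, hi0, hci0⟩ := hg_mid g hg1 hg2
    rw [Finset.sum_eq_single i0]
    · rw [hci0, if_pos hg3.symm]
    · intro j hj hne
      rw [if_neg]
      intro hj1
      have hjlt : j < k0 := Finset.mem_range.1 hj
      have heq : c (j + 1) = c (i0 + 1) := by
        apply eqfst _ _ (hroot_t (j + 1) (by omega)).1 (hroot_t (i0 + 1) (by omega)).1
        · rw [hlen (j + 1) (by omega), hlen (i0 + 1) (by omega)]
        · rw [hj1, hci0, ← hg3]
      rcases Nat.lt_or_ge j i0 with h | h
      · exact hdist (j + 1) (i0 + 1) (by omega) (by omega) heq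
      · exact hdist (i0 + 1) (j + 1) (by omega) (by omega) heq.symm
    · intro h0; exact absurd (Finset.mem_range.2 hi0) h0
  have hA0 : ¬(∃ g : ℕ × ℕ, prec D p g ∧ prec D g q ∧ p.2 = g.1) →
      ∑ i ∈ Finset.range k0, (if (c (i + 1)).1 = p.2 then (1 : ℂ) else 0) = 0 := by
    intro hE
    apply Finset.sum_eq_zero
    intro i hi
    rw [if_neg]
    intro h1
    exact hE ⟨c (i + 1), (hmid_prec i (Finset.mem_range.1 hi)).1,
      (hmid_prec i (Finset.mem_range.1 hi)).2, h1.symm⟩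
  have hB1 : (∃ g : ℕ × ℕ, prec D p g ∧ prec D g q ∧ g.2 = p.1) →
      ∑ i ∈ Finset.range k0, (if (c (i + 1)).2 = p.1 then (1 : ℂ) else 0) = 1 := by
    rintro ⟨g, hg1, hg2, hg3⟩
    obtain ⟨i0, hi0, hci0⟩ := hg_mid g hg1 hg2
    rw [Finset.sum_eq_single i0]
    · rw [hci0, if_pos hg3]
    · intro j hj hne
      rw [if_neg]
      intro hj1
      have hjlt : j < k0 := Finset.mem_range.1 hj
      have heq : c (j + 1) = c (i0 + 1) := by
        apply eqsnd _ _ (hroot_t (j + 1) (by omega)).1 (hroot_t (i0 + 1) (by omega)).1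
        · rw [hlen (j + 1) (by omega), hlen (i0 + 1) (by omega)]
        · rw [hj1, hci0, hg3]
      rcases Nat.lt_or_ge j i0 with h | h
      · exact hdist (j + 1) (i0 + 1) (by omega) (by omega) heq
      · exact hdist (i0 + 1) (j + 1) (by omega) (by omega) heq.symm
    · intro h0; exact absurd (Finset.mem_range.2 hi0) h0
  have hB0 : ¬(∃ g : ℕ × ℕ, prec D p g ∧ prec D g q ∧ g.2 = p.1) →
      ∑ i ∈ Finset.range k0, (if (c (i + 1)).2 = p.1 then (1 : ℂ) else 0) = 0 := by
    intro hE
    apply Finset.sum_eq_zero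
    intro i hi
    rw [if_neg]
    intro h1
    exact hE ⟨c (i + 1), (hmid_prec i (Finset.mem_range.1 hi)).1,
      (hmid_prec i (Finset.mem_range.1 hi)).2, h1⟩
  -- value of P0 q p
  have hqlen : q.2 - q.1 = p.2 - p.1 := stepIter_len hch
  have hP0q : P0 q p = -((if p.2 = q.1 then (1 : ℂ) else 0) + (if q.2 = p.1 then 1 else 0)) := by
    unfold P0
    have h1 : ¬(q.1 = p.1) := fun h => hq_ne (eqfst q p hqr.1 hpr.1 hqlen h)
    have h2 : ¬(q.2 = p.2) := fun h => hq_ne (eqsnd q p hqr.1 hpr.1 hqlen h)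
    have e1 : (if q.1 = p.2 then (1 : ℂ) else 0) = (if p.2 = q.1 then 1 else 0) := by
      by_cases h : q.1 = p.2
      · rw [if_pos h, if_pos h.symm]
      · rw [if_neg h, if_neg (fun hh => h hh.symm)]
    rw [if_neg h1, if_neg h2, e1]
    ring
  -- value of mid P0 terms
  have hP0mid : ∀ i ∈ Finset.range k0, P0 (c (i + 1)) p
      = (-(if (c (i + 1)).1 = p.2 then (1 : ℂ) else 0))
        + (-(if (c (i + 1)).2 = p.1 then (1 : ℂ) else 0)) := by
    intro i hi
    have hik : i < k0 := Finset.mem_range.1 hi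
    have hne : c (i + 1) ≠ p := by
      intro h
      have hd := hdist 0 (i + 1) (by omega) (by omega)
      rw [hc0] at hd
      exact hd h.symm
    have hroot : IsRoot n (c (i + 1)) := hroot_t (i + 1) (by omega)
    have hl : (c (i + 1)).2 - (c (i + 1)).1 = p.2 - p.1 := hlen (i + 1) (by omega)
    have h1 : ¬((c (i + 1)).1 = p.1) := fun h => hne (eqfst _ _ hroot.1 hpr.1 hl h)
    have h2 : ¬((c (i + 1)).2 = p.2) := fun h => hne (eqsnd _ _ hroot.1 hpr.1 hl h)
    unfold P0
    rw [if_neg h1, if_neg h2]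
    ring
  have hSval : S = (-∑ i ∈ Finset.range k0, (if (c (i + 1)).1 = p.2 then (1 : ℂ) else 0))
      + (-∑ i ∈ Finset.range k0, (if (c (i + 1)).2 = p.1 then (1 : ℂ) else 0)) := by
    rw [hSdef, Finset.sum_congr rfl hP0mid, Finset.sum_add_distrib]
    rw [Finset.sum_neg_distrib, Finset.sum_neg_distrib]
  -- assemble
  have hFF : s p.1 q.1 - s p.1 q.2 - s p.2 q.1 + s p.2 q.2 = 1 + S + (1 / 2 : ℂ) * P0 q p := hF
  have hPSeq : PS D p q
      = (1 / 2 : ℂ) * ((if p.2 = q.1 then (1 : ℂ) else 0) + (if q.2 = p.1 then 1 else 0))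
        + (if ∃ g : ℕ × ℕ, prec D p g ∧ prec D g q ∧ p.2 = g.1 then 1 else 0)
        + (if ∃ g : ℕ × ℕ, prec D p g ∧ prec D g q ∧ g.2 = p.1 then 1 else 0) := rfl
  by_cases hE1 : ∃ g : ℕ × ℕ, prec D p g ∧ prec D g q ∧ p.2 = g.1
  · have ha := hA1 hE1
    by_cases hE2 : ∃ g : ℕ × ℕ, prec D p g ∧ prec D g q ∧ g.2 = p.1
    · have hb := hB1 hE2
      rw [hPSeq, if_pos hE1, if_pos hE2]
      rw [ha, hb] at hSval
      linear_combination -hFF - hSval - (1 / 2 : ℂ) * hP0q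
    · have hb := hB0 hE2
      rw [hPSeq, if_pos hE1, if_neg hE2]
      rw [ha, hb] at hSval
      linear_combination -hFF - hSval - (1 / 2 : ℂ) * hP0q
  · have ha := hA0 hE1
    by_cases hE2 : ∃ g : ℕ × ℕ, prec D p g ∧ prec D g q ∧ g.2 = p.1
    · have hb := hB1 hE2
      rw [hPSeq, if_neg hE1, if_pos hE2]
      rw [ha, hb] at hSval
      linear_combination -hFF - hSval - (1 / 2 : ℂ) * hP0q
    · have hb := hB0 hE2
      rw [hPSeq, if_neg hE1, if_neg hE2]
      rw [ha, hb] at hSval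
      linear_combination -hFF - hSval - (1 / 2 : ℂ) * hP0q

end AuxAdm


/-! ### Matrix-level lemmas -/

section AuxMat

lemma qMat_diag (n : ℕ) (u : ℂ) (f : ℕ → ℕ → ℂ) :
    qMat n u f = Matrix.diagonal (fun p : Fin n × Fin n =>
      Complex.exp (u / 2 * f p.1 p.2)) := rfl

lemma conj_apply {n : ℕ} (u : ℂ) (f : ℕ → ℕ → ℂ) (X : M2 n) (p q : Fin n × Fin n) :
    (qMat n u f * X * qMat n u f) p q
      = Complex.exp (u / 2 * f p.1 p.2) * X p q * Complex.exp (u / 2 * f q.1 q.2) := by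
  rw [qMat_diag, Matrix.mul_diagonal, Matrix.diagonal_mul]

lemma conj_tens {n : ℕ} (u : ℂ) (f : ℕ → ℕ → ℂ) (a b a' b' : ℕ) :
    qMat n u f * tens (Eu n a b) (Eu n a' b') * qMat n u f
      = Complex.exp (u / 2 * (f a a' + f b b')) • tens (Eu n a b) (Eu n a' b') := by
  ext p q
  rw [Matrix.smul_apply, conj_apply]
  simp only [tens, Eu, smul_eq_mul]
  by_cases h1 : (p.1 : ℕ) = a ∧ (q.1 : ℕ) = b
  · by_cases h2 : (p.2 : ℕ) = a' ∧ (q.2 : ℕ) = b'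
    · rw [if_pos h1, if_pos h2, h1.1, h1.2, h2.1, h2.2, mul_add, Complex.exp_add]
      ring
    · rw [if_neg h2]; ring
  · rw [if_neg h1]; ring

lemma sum1_apply {n : ℕ} (p q : Fin n × Fin n) :
    (∑ i ∈ Finset.range n, tens (Eu n i i) (Eu n i i)) p q
      = if p = q ∧ (p.1 : ℕ) = (p.2 : ℕ) then 1 else 0 := by
  rw [Matrix.sum_apply]
  simp only [tens, Eu]
  by_cases h : p = q ∧ (p.1 : ℕ) = (p.2 : ℕ)
  · obtain ⟨rfl, h2⟩ := h
    rw [if_pos ⟨rfl, h2⟩]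
    rw [Finset.sum_eq_single ((p.1 : ℕ))]
    · rw [if_pos ⟨rfl, rfl⟩, if_pos ⟨h2.symm, h2.symm⟩]; ring
    · intro i _ hne
      rw [if_neg (fun hc => hne hc.1.symm)]; ring
    · intro hmem; exact absurd (Finset.mem_range.2 p.1.isLt) hmem
  · rw [if_neg h]
    apply Finset.sum_eq_zero
    intro i _
    by_cases c1 : (p.1 : ℕ) = i ∧ (q.1 : ℕ) = i
    · by_cases c2 : (p.2 : ℕ) = i ∧ (q.2 : ℕ) = i
      · exfalso
        apply h
        refine ⟨Prod.ext_iff.2 ⟨Fin.val_injective (c1.1.trans c1.2.symm),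
          Fin.val_injective (c2.1.trans c2.2.symm)⟩, c1.1.trans c2.1.symm⟩
      · rw [if_neg c2]; ring
    · rw [if_neg c1]; ring

lemma sum2_apply {n : ℕ} (p q : Fin n × Fin n) :
    (∑ i ∈ Finset.range n, ∑ j ∈ Finset.range n,
        (if i ≠ j then (1 : ℂ) else 0) • tens (Eu n i i) (Eu n j j)) p q
      = if p = q ∧ (p.1 : ℕ) ≠ (p.2 : ℕ) then 1 else 0 := by
  simp only [Matrix.sum_apply, Matrix.smul_apply, tens, Eu, smul_eq_mul]
  by_cases h : p = q ∧ (p.1 : ℕ) ≠ (p.2 : ℕ)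
  · obtain ⟨rfl, hne⟩ := h
    rw [if_pos ⟨rfl, hne⟩]
    rw [Finset.sum_eq_single ((p.1 : ℕ))]
    · rw [Finset.sum_eq_single ((p.2 : ℕ))]
      · rw [if_pos hne, if_pos ⟨rfl, rfl⟩, if_pos ⟨rfl, rfl⟩]; ring
      · intro j _ hne'
        rw [if_neg (show ¬((p.2 : ℕ) = j ∧ (p.2 : ℕ) = j) from fun hc => hne' hc.1.symm)]
        ring
      · intro hmem; exact absurd (Finset.mem_range.2 p.2.isLt) hmem
    · intro i _ hne'
      apply Finset.sum_eq_zero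
      intro j _
      rw [if_neg (show ¬((p.1 : ℕ) = i ∧ (p.1 : ℕ) = i) from fun hc => hne' hc.1.symm)]
      ring
    · intro hmem; exact absurd (Finset.mem_range.2 p.1.isLt) hmem
  · rw [if_neg h]
    apply Finset.sum_eq_zero
    intro i _
    apply Finset.sum_eq_zero
    intro j _
    by_cases c1 : (p.1 : ℕ) = i ∧ (q.1 : ℕ) = i
    · by_cases c2 : (p.2 : ℕ) = j ∧ (q.2 : ℕ) = j
      · by_cases c3 : i ≠ j
        · exfalso
          apply h
          refine ⟨Prod.ext_iff.2 ⟨Fin.val_injective (c1.1.trans c1.2.symm),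
            Fin.val_injective (c2.1.trans c2.2.symm)⟩, ?_⟩
          rw [c1.1, c2.1]; exact c3
        · rw [if_neg c3]; ring
      · rw [if_neg c2]; ring
    · rw [if_neg c1]; ring

lemma conj_diagpart {n : ℕ} (u : ℂ) (s : ℕ → ℕ → ℂ) :
    qMat n u s * (qp u 1 • ∑ i ∈ Finset.range n, tens (Eu n i i) (Eu n i i)
      + ∑ i ∈ Finset.range n, ∑ j ∈ Finset.range n,
          (if i ≠ j then (1 : ℂ) else 0) • tens (Eu n i i) (Eu n j j)) * qMat n u s
    = qMat n u (fun i k => (if i = k then 1 else 0) + 2 * s i k) := by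
  ext p q
  rw [conj_apply, Matrix.add_apply, Matrix.smul_apply, sum1_apply, sum2_apply, smul_eq_mul]
  show _ = if p = q then Complex.exp (u / 2 * ((if (p.1 : ℕ) = (p.2 : ℕ) then 1 else 0)
    + 2 * s p.1 p.2)) else 0
  by_cases hpq : p = q
  · subst hpq
    by_cases hd : (p.1 : ℕ) = (p.2 : ℕ)
    · rw [if_pos ⟨rfl, hd⟩, if_neg (fun hc => hc.2 hd), if_pos rfl, if_pos hd, qp]
      rw [show Complex.exp (u / 2 * s p.1 p.2) * (Complex.exp (u * 1 / 2) * 1 + 0)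
          * Complex.exp (u / 2 * s p.1 p.2)
          = Complex.exp (u / 2 * s p.1 p.2 + u * 1 / 2 + u / 2 * s p.1 p.2) from by
        rw [Complex.exp_add, Complex.exp_add]; ring]
      congr 1; ring
    · rw [if_neg (fun hc => hd hc.2), if_pos ⟨rfl, hd⟩, if_pos rfl]
      rw [show Complex.exp (u / 2 * s p.1 p.2) * (qp u 1 * 0 + 1)
          * Complex.exp (u / 2 * s p.1 p.2)
          = Complex.exp (u / 2 * s p.1 p.2 + u / 2 * s p.1 p.2) from by
        rw [Complex.exp_add]; ring]
      rw [if_neg hd]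
      congr 1; ring
  · rw [if_neg (fun hc => hpq hc.1), if_neg (fun hc => hpq hc.1), if_neg hpq]
    ring

lemma conj_Rst {n : ℕ} (u : ℂ) (s : ℕ → ℕ → ℂ) (hanti : ∀ i k : ℕ, s k i = - s i k) :
    qMat n u s * RstMat n u * qMat n u s
      = (qp u 1 - qp u (-1)) • (∑ p ∈ roots n, tens (Eu n p.2 p.1) (Eu n p.1 p.2))
        + qMat n u (fun i k => (if i = k then 1 else 0) + 2 * s i k) := by
  rw [RstMat, Matrix.mul_add, Matrix.add_mul, conj_diagpart]
  have hC : qMat n u s * ((qp u 1 - qp u (-1)) •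
        ∑ p ∈ roots n, tens (Eu n p.2 p.1) (Eu n p.1 p.2)) * qMat n u s
      = (qp u 1 - qp u (-1)) • ∑ p ∈ roots n, tens (Eu n p.2 p.1) (Eu n p.1 p.2) := by
    rw [Matrix.mul_smul, Matrix.smul_mul]
    congr 1
    rw [Finset.mul_sum, Finset.sum_mul]
    apply Finset.sum_congr rfl
    intro x _
    rw [conj_tens]
    rw [show s x.2 x.1 + s x.1 x.2 = 0 from by rw [hanti x.1 x.2]; ring,
      mul_zero, Complex.exp_zero, one_smul]
  rw [hC, add_comm]

open scoped Classical in
lemma conj_prec {n : ℕ} (D : BDTriple n) (CC : ℕ × ℕ → ℕ × ℕ → Bool) (u : ℂ)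
    (s : ℕ → ℕ → ℂ) (hs : Admissible D s) :
    qMat n u s * (∑ x ∈ precPairs D,
        ((-1 : ℂ) ^ Cnum CC x.1 x.2) •
          (qp u (-(Cnum CC x.1 x.2 : ℂ) - PS D x.1 x.2) •
              tens (Eu n x.1.2 x.1.1) (Eu n x.2.1 x.2.2)
            - qp u ((Cnum CC x.1 x.2 : ℂ) + PS D x.1 x.2) •
              tens (Eu n x.2.1 x.2.2) (Eu n x.1.2 x.1.1))) * qMat n u s
      = ∑ x ∈ precPairs D,
          ((-1 : ℂ) ^ Cnum CC x.1 x.2) •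
            (qp u (-(Cnum CC x.1 x.2 : ℂ) + s x.1.1 x.2.1 + s x.1.2 x.2.2 - 1) •
                tens (Eu n x.1.2 x.1.1) (Eu n x.2.1 x.2.2)
              - qp u ((Cnum CC x.1 x.2 : ℂ) + 1 - s x.1.1 x.2.1 - s x.1.2 x.2.2) •
                tens (Eu n x.2.1 x.2.2) (Eu n x.1.2 x.1.1)) := by
  rw [Finset.mul_sum, Finset.sum_mul]
  apply Finset.sum_congr rfl
  intro x hx
  have hprec : prec D x.1 x.2 := (Finset.mem_filter.1 hx).2
  have hkey := keyPS hs hprec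
  rw [Matrix.mul_smul, Matrix.smul_mul]
  congr 1
  rw [mul_sub, sub_mul, Matrix.mul_smul, Matrix.smul_mul, Matrix.mul_smul, Matrix.smul_mul,
    conj_tens, conj_tens, smul_smul, smul_smul]
  have e1 : qp u (-(Cnum CC x.1 x.2 : ℂ) - PS D x.1 x.2)
        * Complex.exp (u / 2 * (s x.1.2 x.2.1 + s x.1.1 x.2.2))
      = qp u (-(Cnum CC x.1 x.2 : ℂ) + s x.1.1 x.2.1 + s x.1.2 x.2.2 - 1) := by
    rw [qp, qp, ← Complex.exp_add]
    congr 1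
    linear_combination (u / 2) * hkey
  have e2 : qp u ((Cnum CC x.1 x.2 : ℂ) + PS D x.1 x.2)
        * Complex.exp (u / 2 * (s x.2.1 x.1.2 + s x.2.2 x.1.1))
      = qp u ((Cnum CC x.1 x.2 : ℂ) + 1 - s x.1.1 x.2.1 - s x.1.2 x.2.2) := by
    rw [qp, qp, ← Complex.exp_add]
    congr 1
    linear_combination -(u / 2) * hkey + (u / 2) * hs.1 x.1.2 x.2.1 + (u / 2) * hs.1 x.1.1 x.2.2
  rw [e1, e2]

end AuxMat

/-- Rewriting of the GGS matrix using the contraction `(α ⊗ β)s`: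
`R_GGS = (q - q⁻¹)[Σ_{α>0} e_{-α}⊗e_α + Σ_{α≺β} (-1)^{C(|α|-1)}
  (q^{-C(|α|-1)+s_{ik}+s_{jl}-1} e_{-α}⊗e_β - q^{C(|α|-1)+1-s_{ik}-s_{jl}} e_β⊗e_{-α})]
  + q^{Σ_i e_ii⊗e_ii + 2s}`. -/
theorem RGGS_rewrite (n : ℕ) (hn : 2 ≤ n) (D : BDTriple n)
    (CC : ℕ × ℕ → ℕ × ℕ → Bool) (hCC : CCSpec D CC)
    (s : ℕ → ℕ → ℂ) (hs : Admissible D s) (u : ℂ) :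
    RGGS D CC s u =
      (qp u 1 - qp u (-1)) •
        ((∑ p ∈ roots n, tens (Eu n p.2 p.1) (Eu n p.1 p.2))
          + ∑ x ∈ precPairs D,
            ((-1 : ℂ) ^ Cnum CC x.1 x.2) •
              (qp u (-(Cnum CC x.1 x.2 : ℂ) + s x.1.1 x.2.1 + s x.1.2 x.2.2 - 1) •
                  tens (Eu n x.1.2 x.1.1) (Eu n x.2.1 x.2.2)
                - qp u ((Cnum CC x.1 x.2 : ℂ) + 1 - s x.1.1 x.2.1 - s x.1.2 x.2.2) •
                  tens (Eu n x.2.1 x.2.2) (Eu n x.1.2 x.1.1)))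
      + qMat n u (fun i k => (if i = k then 1 else 0) + 2 * s i k) := by
  rw [RGGS, Matrix.mul_add, Matrix.add_mul, conj_Rst u s hs.1,
    Matrix.mul_smul, Matrix.smul_mul, conj_prec D CC u s hs, smul_add]
  abel
end
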